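/- arXiv:1303.4575 — 3 statements merged into one kernel-verified Lean document; each statement's English description precedes it below -/
import Mathlib

section
/- Let (γ, ℓ, ℓ⁽²⁾) be coordinate hypersurface metric data on U with inverse blocks (P, n, n⁽²⁾) and derived fields F, U, Γ̊. Then the following identities hold on U: (1) ∇̊_c(n⁽²⁾P^{bd} − n^bn^d) = −(n⁽²⁾P^{bd} − n^bn^d)(2F_{cf}n^f + n⁽²⁾∂_cℓ⁽²⁾) + U_{cf}(2n^fP^{bd} − P^{bf}n^d − P^{df}n^b); (2) ∇̊_d(P^{bd}n^c − P^{bc}n^d) = n⁽²⁾∂_dℓ⁽²⁾(P^{bc}n^d − P^{bd}n^c) + F_{df}(n^bn^dP^{cf} − P^{bd}n^cn^f − n⁽²⁾P^{bd}P^{cf}) + U_{df}(P^{bd}P^{cf} − P^{bc}P^{df}); and for every smooth symmetric field Z_{ab}: (3) (∇̊_dZ_{bc} − ∇̊_cZ_{bd})(n⁽²⁾P^{bd} − n^bn^d) = ∇̊_f[(n⁽²⁾P^{bd} − n^bn^d)(δ^f_dZ_{bc} − δ^f_cZ_{bd})] + (n⁽²⁾P^{bd} − n^bn^d)[Z_{bc}(2F_{df}n^f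 + n⁽²⁾∂_dℓ⁽²⁾) − Z_{bd}(2F_{cf}n^f + n⁽²⁾∂_cℓ⁽²⁾)] + (P^{df}n^b − P^{bd}n^f)(Z_{bc}U_{df} − 2Z_{bd}U_{cf}); (4) (∇̊_dZ_{bc} − ∇̊_cZ_{bd})P^{bd}n^c = ∇̊_d((P^{bd}n^c − P^{bc}n^d)Z_{bc}) + Z_{bc}[U_{df}(P^{bc}P^{df} − P^{bd}P^{cf}) + 2F_{df}P^{bd}n^cn^f + n⁽²⁾∂_dℓ⁽²⁾(P^{bd}n^c − P^{bc}n^d)]. -/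
/-!
Differentiating `𝔸⁻¹𝔸 = 1` gives `∂(𝔸⁻¹) = -𝔸⁻¹(∂𝔸)𝔸⁻¹`, i.e. `∂P`, `∂n`, `∂n⁽²⁾` in terms of
`∂γ`, `∂ℓ`, `∂ℓ⁽²⁾`. Writing `Γ̊^c_{ab} = P^{cd}Γ_{d,ab} + n^c S_{ab}`, with `Γ_{d,ab}` the
Christoffel symbols of the first kind of `γ` and `S_{ab} = ½(∂_aℓ_b + ∂_bℓ_a)`, metric
compatibility `∂_cγ_{ab} = Γ_{b,ca} + Γ_{a,cb}` makes every `∂γ` cancel in `∇̊P`, `∇̊n` and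
`∂n⁽²⁾`, which become expressions in `F`, `U` and `∂ℓ⁽²⁾` alone. Identities (1) and (2) follow
from these by the Leibniz rule. For (3) and (4), the Leibniz rule for a contraction (valid for any
connection, since the connection terms of a contracted pair of indices cancel) turns the left-hand
side into a divergence plus the contraction of `Z` with `∇̊(n⁽²⁾P − n⊗n)`, resp. with
`∇̊_d(P^{bd}n^c − P^{bc}n^d)`, which (1), resp. (2), evaluates; the leftover terms vanish because
a symmetric tensor (`U` or `Z`) is contracted with an antisymmetric one.
-/

open scoped BigOperators

noncomputable section

namespace HypData

variable {m : ℕ}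

/-- Scalar field on ℝ^m. -/
abbrev Sc (m : ℕ) := (Fin m → ℝ) → ℝ
/-- One-index field. -/
abbrev Vec (m : ℕ) := (Fin m → ℝ) → Fin m → ℝ
/-- Two-index field. -/
abbrev Ten (m : ℕ) := (Fin m → ℝ) → Fin m → Fin m → ℝ
/-- Connection coefficients `Γ x c a b = Γ^c_{ab}` (first index upper). -/
abbrev Conn (m : ℕ) := (Fin m → ℝ) → Fin m → Fin m → Fin m → ℝ
/-- Three-index field. -/
abbrev Ten3 (m : ℕ) := (Fin m → ℝ) → Fin m → Fin m → Fin m → ℝ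

/-- Partial derivative of `f` in the `a`-th coordinate direction at `x`. -/
def pd (a : Fin m) (f : Sc m) (x : Fin m → ℝ) : ℝ :=
  fderiv ℝ f x (Pi.single a 1)

/-- Kronecker delta. -/
def kd (a b : Fin m) : ℝ := if a = b then 1 else 0

/-- Equations (EqP1)-(EqP4): `[[P,n],[nᵀ,n2]]` consists of the inverse blocks of
the block matrix `[[γ,ℓ],[ℓᵀ,ℓ2]]`. -/
def InvBlocks (γ : Fin m → Fin m → ℝ) (ℓ : Fin m → ℝ) (ℓ2 : ℝ)
    (P : Fin m → Fin m → ℝ) (n : Fin m → ℝ) (n2 : ℝ) : Prop :=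
  (∀ a b, (∑ c, P a c * γ c b) + n a * ℓ b = kd a b) ∧
  (∀ a, (∑ b, P a b * ℓ b) + ℓ2 * n a = 0) ∧
  ((∑ a, n a * ℓ a) + n2 * ℓ2 = 1) ∧
  (∀ a, (∑ b, γ a b * n b) + n2 * ℓ a = 0)

/-- ∇_a ω_b. -/
def covD1 (Γ : Conn m) (ω : Vec m) (x : Fin m → ℝ) (a b : Fin m) : ℝ :=
  pd a (fun y => ω y b) x - ∑ d, Γ x d a b * ω x d

/-- ∇_a X^b. -/
def covD1U (Γ : Conn m) (X : Vec m) (x : Fin m → ℝ) (a b : Fin m) : ℝ :=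
  pd a (fun y => X y b) x + ∑ d, Γ x b a d * X x d

/-- ∇_a T_{bc}. -/
def covD2 (Γ : Conn m) (T : Ten m) (x : Fin m → ℝ) (a b c : Fin m) : ℝ :=
  pd a (fun y => T y b c) x - (∑ d, Γ x d a b * T x d c) - (∑ d, Γ x d a c * T x b d)

/-- ∇_a T^{bc}. -/
def covD2U (Γ : Conn m) (T : Ten m) (x : Fin m → ℝ) (a b c : Fin m) : ℝ :=
  pd a (fun y => T y b c) x + (∑ d, Γ x b a d * T x d c) + (∑ d, Γ x c a d * T x b d)

/-- ∇_a S^b_c (first index of `S` upper, second lower). -/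
def covD11 (Γ : Conn m) (S : Ten m) (x : Fin m → ℝ) (a b c : Fin m) : ℝ :=
  pd a (fun y => S y b c) x + (∑ d, Γ x b a d * S x d c) - (∑ d, Γ x d a c * S x b d)

/-- ∇_a Q^{bcd}. -/
def covD3U (Γ : Conn m) (Q : Ten3 m) (x : Fin m → ℝ) (a b c d : Fin m) : ℝ :=
  pd a (fun y => Q y b c d) x + (∑ f, Γ x b a f * Q x f c d)
    + (∑ f, Γ x c a f * Q x b f d) + (∑ f, Γ x d a f * Q x b c f)

/-- Curvature `R^a_{bcd} = ∂_cΓ^a_{db} − ∂_dΓ^a_{cb} + Γ^a_{cf}Γ^f_{db} − Γ^a_{df}Γ^f_{cb}`. -/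
def curv (Γ : Conn m) (x : Fin m → ℝ) (a b c d : Fin m) : ℝ :=
  pd c (fun y => Γ y a d b) x - pd d (fun y => Γ y a c b) x
    + (∑ f, Γ x a c f * Γ x f d b) - (∑ f, Γ x a d f * Γ x f c b)

/-- `F_{ab} = ½(∂_aℓ_b − ∂_bℓ_a)`. -/
def Ff (ℓ : Vec m) (x : Fin m → ℝ) (a b : Fin m) : ℝ :=
  (pd a (fun y => ℓ y b) x - pd b (fun y => ℓ y a) x) / 2

/-- `U_{ab} = ½(n^c∂_cγ_{ab} + γ_{cb}∂_an^c + γ_{ac}∂_bn^c + ℓ_a∂_bn⁽²⁾ + ℓ_b∂_an⁽²⁾)`. -/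
def Uf (γ : Ten m) (ℓ : Vec m) (n : Vec m) (n2 : Sc m)
    (x : Fin m → ℝ) (a b : Fin m) : ℝ :=
  ((∑ c, (n x c * pd c (fun y => γ y a b) x + γ x c b * pd a (fun y => n y c) x
      + γ x a c * pd b (fun y => n y c) x))
    + ℓ x a * pd b n2 x + ℓ x b * pd a n2 x) / 2

/-- Metric hypersurface connection `Γ̊^c_{ab}`. -/
def Gam0 (γ : Ten m) (ℓ : Vec m) (P : Ten m) (n : Vec m)
    (x : Fin m → ℝ) (c a b : Fin m) : ℝ :=
  (∑ d, P x c d * (pd a (fun y => γ y b d) x + pd b (fun y => γ y a d) x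
      - pd d (fun y => γ y a b) x)) / 2
  + n x c * (pd a (fun y => ℓ y b) x + pd b (fun y => ℓ y a) x) / 2

/-- The connection `Γ̄^c_{ab} = Γ̊^c_{ab} − n^c Y_{ab}`. -/
def GamB (γ : Ten m) (ℓ : Vec m) (P : Ten m) (n : Vec m) (Y : Ten m)
    (x : Fin m → ℝ) (c a b : Fin m) : ℝ :=
  Gam0 γ ℓ P n x c a b - n x c * Y x a b

/-- `K_{ab} = n⁽²⁾Y_{ab} + U_{ab}`. -/
def Kf (γ : Ten m) (ℓ : Vec m) (n : Vec m) (n2 : Sc m) (Y : Ten m)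
    (x : Fin m → ℝ) (a b : Fin m) : ℝ :=
  n2 x * Y x a b + Uf γ ℓ n n2 x a b

/-- `φ_a = ½n⁽²⁾∂_aℓ⁽²⁾ + n^b(Y_{ab} + F_{ab})`. -/
def phif (ℓ : Vec m) (ℓ2 : Sc m) (n : Vec m) (n2 : Sc m) (Y : Ten m)
    (x : Fin m → ℝ) (a : Fin m) : ℝ :=
  n2 x * pd a ℓ2 x / 2 + ∑ b, n x b * (Y x a b + Ff ℓ x a b)

/-- `Ψ^b_a = P^{bc}(Y_{ac} + F_{ac}) + ½n^b∂_aℓ⁽²⁾`. -/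
def Psif (ℓ : Vec m) (ℓ2 : Sc m) (P : Ten m) (n : Vec m) (Y : Ten m)
    (x : Fin m → ℝ) (b a : Fin m) : ℝ :=
  (∑ c, P x b c * (Y x a c + Ff ℓ x a c)) + n x b * pd a ℓ2 x / 2

/-- Smoothness of a scalar field on `U`. -/
def SmSc (U : Set (Fin m → ℝ)) (f : Sc m) : Prop := ContDiffOn ℝ (⊤ : ℕ∞) f U
/-- Smoothness of a one-index field on `U`. -/
def SmVec (U : Set (Fin m → ℝ)) (f : Vec m) : Prop :=
  ∀ a, ContDiffOn ℝ (⊤ : ℕ∞) (fun x => f x a) U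
/-- Smoothness of a two-index field on `U`. -/
def SmTen (U : Set (Fin m → ℝ)) (f : Ten m) : Prop :=
  ∀ a b, ContDiffOn ℝ (⊤ : ℕ∞) (fun x => f x a b) U

/-- Smooth coordinate hypersurface metric data on `U`. -/
def MetricData (U : Set (Fin m → ℝ)) (γ : Ten m) (ℓ : Vec m) (ℓ2 : Sc m)
    (P : Ten m) (n : Vec m) (n2 : Sc m) : Prop :=
  SmTen U γ ∧ SmVec U ℓ ∧ SmSc U ℓ2 ∧ SmTen U P ∧ SmVec U n ∧ SmSc U n2 ∧
  (∀ x ∈ U, ∀ a b, γ x a b = γ x b a) ∧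
  (∀ x ∈ U, ∀ a b, P x a b = P x b a) ∧
  (∀ x ∈ U, InvBlocks (γ x) (ℓ x) (ℓ2 x) (P x) (n x) (n2 x))

/-- Gauge-transformed `ℓ`. -/
def gaugeL (γ : Ten m) (ℓ : Vec m) (u : Sc m) (V : Vec m) : Vec m :=
  fun x a => u x * (ℓ x a + ∑ b, V x b * γ x a b)

/-- Gauge-transformed `ℓ⁽²⁾`. -/
def gaugeL2 (γ : Ten m) (ℓ : Vec m) (ℓ2 : Sc m) (u : Sc m) (V : Vec m) : Sc m :=
  fun x => u x ^ 2 * (ℓ2 x + 2 * (∑ a, V x a * ℓ x a) + ∑ a, ∑ b, V x a * V x b * γ x a b)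

/-- Gauge-transformed `Y`. -/
def gaugeY (γ : Ten m) (ℓ : Vec m) (Y : Ten m) (u : Sc m) (V : Vec m) : Ten m :=
  fun x a b => u x * Y x a b + (ℓ x a * pd b u x + ℓ x b * pd a u x) / 2
    + ((u x * ∑ c, V x c * pd c (fun y => γ y a b) x)
      + (∑ c, γ x c b * pd a (fun y => u y * V y c) x)
      + (∑ c, γ x a c * pd b (fun y => u y * V y c) x)) / 2

/-- Gauge-transformed `P`. -/
def gaugeP (P : Ten m) (n : Vec m) (n2 : Sc m) (V : Vec m) : Ten m :=
  fun x a b => P x a b + n2 x * V x a * V x b - V x a * n x b - V x b * n x a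

/-- Gauge-transformed `n`. -/
def gaugeN (n : Vec m) (n2 : Sc m) (u : Sc m) (V : Vec m) : Vec m :=
  fun x a => (u x)⁻¹ * (n x a - n2 x * V x a)

/-- Gauge-transformed `n⁽²⁾`. -/
def gaugeN2 (n2 : Sc m) (u : Sc m) : Sc m :=
  fun x => ((u x) ^ 2)⁻¹ * n2 x

/-- Shell energy-momentum tensor `τ^{fa}` built pointwise from the jump `V_{ab}`. -/
def tauP (P : Fin m → Fin m → ℝ) (n : Fin m → ℝ) (n2 : ℝ) (V : Fin m → Fin m → ℝ)
    (f a : Fin m) : ℝ :=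
  (∑ c, ∑ d, (n f * P a c + n a * P f c) * n d * V c d)
  - (∑ c, ∑ d, (n2 * P f c * P a d + P f a * n c * n d) * V c d)
  + (n2 * P f a - n f * n a) * (∑ c, ∑ d, P c d * V c d)

/-- `τ^f_c = −(n⁽²⁾P^{bd} − n^bn^d)(δ^f_dV_{bc} − δ^f_cV_{bd})`. -/
def tauMixP (P : Fin m → Fin m → ℝ) (n : Fin m → ℝ) (n2 : ℝ)
    (V : Fin m → Fin m → ℝ) (f c : Fin m) : ℝ :=
  -(∑ b, ∑ d, (n2 * P b d - n b * n d) * (kd f d * V b c - kd f c * V b d))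

/-- `T^f = (P^{bf}n^c − P^{bc}n^f)V_{bc}`. -/
def tauVecP (P : Fin m → Fin m → ℝ) (n : Fin m → ℝ) (V : Fin m → Fin m → ℝ)
    (f : Fin m) : ℝ :=
  ∑ b, ∑ c, (P b f * n c - P b c * n f) * V b c

/-- The block matrix 𝔸. -/
def blockA (γ : Ten m) (ℓ : Vec m) (ℓ2 : Sc m) (x : Fin m → ℝ) :
    Matrix (Fin m ⊕ Unit) (Fin m ⊕ Unit) ℝ :=
  fun i j =>
    match i, j with
    | Sum.inl a, Sum.inl b => γ x a b
    | Sum.inl a, Sum.inr _ => ℓ x a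
    | Sum.inr _, Sum.inl b => ℓ x b
    | Sum.inr _, Sum.inr _ => ℓ2 x

/-- `det 𝔸` as a scalar field. -/
def detA (γ : Ten m) (ℓ : Vec m) (ℓ2 : Sc m) (x : Fin m → ℝ) : ℝ :=
  (blockA γ ℓ ℓ2 x).det

end HypData

namespace HypData

open Finset

variable {m : ℕ}

section Calculus

variable {x : Fin m → ℝ} {f g : Sc m} (a : Fin m)

theorem pd_sub (hf : DifferentiableAt ℝ f x) (hg : DifferentiableAt ℝ g x) :
    pd a (fun y => f y - g y) x = pd a f x - pd a g x := by
  simp [pd, fderiv_fun_sub hf hg]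

theorem pd_mul (hf : DifferentiableAt ℝ f x) (hg : DifferentiableAt ℝ g x) :
    pd a (fun y => f y * g y) x = pd a f x * g x + f x * pd a g x := by
  simp [pd, fderiv_fun_mul hf hg]; ring

theorem pd_const_mul (r : ℝ) (hf : DifferentiableAt ℝ f x) :
    pd a (fun y => r * f y) x = r * pd a f x := by
  simp [pd, fderiv_const_mul hf]

theorem pd_sum {ι : Type*} (s : Finset ι) {F : ι → Sc m}
    (hF : ∀ i ∈ s, DifferentiableAt ℝ (F i) x) :
    pd a (fun y => ∑ i ∈ s, F i y) x = ∑ i ∈ s, pd a (F i) x := by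
  simp [pd, fderiv_fun_sum hF]

theorem pd_congr (h : f =ᶠ[nhds x] g) : pd a f x = pd a g x := by
  simp [pd, h.fderiv_eq]

theorem pd_of_eventually_const {r : ℝ} (h : ∀ᶠ y in nhds x, f y = r) : pd a f x = 0 := by
  rw [pd_congr (g := fun _ => r) a h]; simp [pd]

end Calculus

section Leibniz

variable (Γ : Conn m) {x : Fin m → ℝ}

theorem covD2U_sub {T T' : Ten m} (hT : ∀ i j, DifferentiableAt ℝ (fun y => T y i j) x)
    (hT' : ∀ i j, DifferentiableAt ℝ (fun y => T' y i j) x) (a i j : Fin m) :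
    covD2U Γ (fun y i j => T y i j - T' y i j) x a i j
      = covD2U Γ T x a i j - covD2U Γ T' x a i j := by
  simp only [covD2U, pd_sub a (hT i j) (hT' i j), mul_sub, sum_sub_distrib]; ring

theorem covD2U_mul_left {s : Sc m} {T : Ten m} (hs : DifferentiableAt ℝ s x)
    (hT : ∀ i j, DifferentiableAt ℝ (fun y => T y i j) x) (a i j : Fin m) :
    covD2U Γ (fun y i j => s y * T y i j) x a i j
      = pd a s x * T x i j + s x * covD2U Γ T x a i j := by
  simp only [covD2U, pd_mul a hs (hT i j), mul_add, mul_sum, mul_left_comm (s x)]; ring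

theorem covD2U_tmul {X W : Vec m} (hX : ∀ i, DifferentiableAt ℝ (fun y => X y i) x)
    (hW : ∀ i, DifferentiableAt ℝ (fun y => W y i) x) (a i j : Fin m) :
    covD2U Γ (fun y i j => X y i * W y j) x a i j
      = covD1U Γ X x a i * W x j + X x i * covD1U Γ W x a j := by
  simp only [covD2U, covD1U, pd_mul a (hX i) (hW j), add_mul, mul_add, sum_mul, mul_sum,
    mul_assoc, mul_left_comm (X x i)]; ring

theorem covD3U_tmul_sub_tmul {T : Ten m} {X : Vec m}
    (hT : ∀ i j, DifferentiableAt ℝ (fun y => T y i j) x)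
    (hX : ∀ i, DifferentiableAt ℝ (fun y => X y i) x) (a i j k : Fin m) :
    covD3U Γ (fun y i j k => T y i j * X y k - T y i k * X y j) x a i j k
      = covD2U Γ T x a i j * X x k + T x i j * covD1U Γ X x a k
        - (covD2U Γ T x a i k * X x j + T x i k * covD1U Γ X x a j) := by
  simp only [covD3U, covD2U, covD1U, pd_sub a ((hT i j).fun_mul (hX k)) ((hT i k).fun_mul (hX j)),
    pd_mul a (hT i j) (hX k), pd_mul a (hT i k) (hX j), mul_add, add_mul, mul_sub,
    sum_sub_distrib, mul_sum, sum_mul]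
  simp only [mul_comm, mul_left_comm]
  ring

theorem covD11_sum_mul {T Z : Ten m}
    (hT : ∀ i j, DifferentiableAt ℝ (fun y => T y i j) x)
    (hZ : ∀ i j, DifferentiableAt ℝ (fun y => Z y i j) x) (a d e : Fin m) :
    covD11 Γ (fun y d e => ∑ b, T y b d * Z y b e) x a d e
      = ∑ b, (covD2U Γ T x a b d * Z x b e + T x b d * covD2 Γ Z x a b e) := by
  -- the connection terms acting on the contracted index `b` cancel after renaming `b ↔ k`
  have hcancel : ∑ b, ∑ k, Γ x b a k * T x k d * Z x b e
      = ∑ k, ∑ b, Γ x b a k * T x k d * Z x b e := sum_comm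
  have horder₁ : ∑ k, ∑ b, Γ x d a k * T x b k * Z x b e
      = ∑ b, ∑ k, Γ x d a k * T x b k * Z x b e := sum_comm
  have horder₂ : ∑ k, ∑ b, Γ x k a e * T x b d * Z x b k
      = ∑ b, ∑ k, Γ x k a e * T x b d * Z x b k := sum_comm
  simp only [covD11, covD2U, covD2, pd_sum a _ fun b _ => (hT b d).fun_mul (hZ b e),
    pd_mul a (hT _ d) (hZ _ e), add_mul, mul_sub, sum_add_distrib,
    sum_sub_distrib, mul_sum, sum_mul] at hcancel horder₁ horder₂ ⊢
  simp only [mul_comm, mul_left_comm] at hcancel horder₁ horder₂ ⊢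
  linear_combination horder₁ - horder₂ - hcancel

theorem pd_trace_eq_sum_covD11 {A : Ten m} (hA : ∀ i j, DifferentiableAt ℝ (fun y => A y i j) x)
    (a : Fin m) :
    pd a (fun y => ∑ d, A y d d) x = ∑ d, covD11 Γ A x a d d := by
  have hswap : ∑ d, ∑ k, Γ x d a k * A x k d = ∑ d, ∑ k, Γ x k a d * A x d k := sum_comm
  simp only [covD11, pd_sum a _ fun d _ => hA d d, sum_add_distrib, sum_sub_distrib, hswap]
  ring

theorem covD11_sub_kd_mul {A : Ten m} {φ : Sc m}
    (hA : ∀ i j, DifferentiableAt ℝ (fun y => A y i j) x) (hφ : DifferentiableAt ℝ φ x)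
    (a f c : Fin m) :
    covD11 Γ (fun y f c => A y f c - kd f c * φ y) x a f c
      = covD11 Γ A x a f c - kd f c * pd a φ x := by
  rw [covD11, covD11, pd_sub a (hA f c) (hφ.const_mul _), pd_const_mul a _ hφ]
  simp only [mul_sub, sum_sub_distrib, kd, ite_mul, mul_ite, one_mul, zero_mul, mul_zero,
    sum_ite_eq, sum_ite_eq', mem_univ, if_true]
  ring

theorem sum_covD11_sum_sum_mul_kd {T Z : Ten m}
    (hT : ∀ i j, DifferentiableAt ℝ (fun y => T y i j) x)
    (hZ : ∀ i j, DifferentiableAt ℝ (fun y => Z y i j) x) (c : Fin m) :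
    ∑ f, covD11 Γ (fun y f c => ∑ b, ∑ d, T y b d * (kd f d * Z y b c - kd f c * Z y b d))
        x f f c
      = ∑ b, ∑ d, ((covD2 Γ Z x d b c - covD2 Γ Z x c b d) * T x b d
          + (covD2U Γ T x d b d * Z x b c - covD2U Γ T x c b d * Z x b d)) := by
  set A : Ten m := fun y d e => ∑ b, T y b d * Z y b e with hA_def
  have hA : ∀ i j, DifferentiableAt ℝ (fun y => A y i j) x := fun i j =>
    DifferentiableAt.fun_sum fun b _ => (hT b i).fun_mul (hZ b j)
  have hS : (fun y f c => ∑ b, ∑ d, T y b d * (kd f d * Z y b c - kd f c * Z y b d))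
      = fun y f c => A y f c - kd f c * ∑ d, A y d d := by
    funext y f c
    simp only [hA_def, mul_sub, sum_sub_distrib, mul_sum, kd, mul_ite, ite_mul, one_mul, zero_mul,
      mul_zero, sum_ite_eq, mem_univ, if_true]
    congr 1
    exact sum_comm
  have hφ : DifferentiableAt ℝ (fun y => ∑ d, A y d d) x :=
    DifferentiableAt.fun_sum fun d _ => hA d d
  have h1 : ∑ f, ∑ b, (covD2U Γ T x f b f * Z x b c + T x b f * covD2 Γ Z x f b c)
      = ∑ b, ∑ d, (covD2U Γ T x d b d * Z x b c + T x b d * covD2 Γ Z x d b c) := sum_comm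
  have h2 : ∑ d, ∑ b, (covD2U Γ T x c b d * Z x b d + T x b d * covD2 Γ Z x c b d)
      = ∑ b, ∑ d, (covD2U Γ T x c b d * Z x b d + T x b d * covD2 Γ Z x c b d) := sum_comm
  rw [hS]
  simp only [covD11_sub_kd_mul Γ hA hφ, sum_sub_distrib]
  simp only [kd, ite_mul, one_mul, zero_mul, sum_ite_eq', mem_univ, if_true]
  rw [pd_trace_eq_sum_covD11 Γ hA]
  simp only [hA_def, covD11_sum_mul Γ hT hZ, h1, h2, ← sum_sub_distrib]
  exact sum_congr rfl fun b _ => sum_congr rfl fun d _ => by ring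

theorem covD1U_sum_sum_mul {Q : Ten3 m} {Z : Ten m}
    (hQ : ∀ i j k, DifferentiableAt ℝ (fun y => Q y i j k) x)
    (hZ : ∀ i j, DifferentiableAt ℝ (fun y => Z y i j) x) (a d : Fin m) :
    covD1U Γ (fun y d => ∑ b, ∑ c, Q y b d c * Z y b c) x a d
      = ∑ b, ∑ c, (covD3U Γ Q x a b d c * Z x b c + Q x b d c * covD2 Γ Z x a b c) := by
  have horder : ∑ k, ∑ b, ∑ c, Γ x d a k * Q x b k c * Z x b c
      = ∑ b, ∑ c, ∑ k, Γ x d a k * Q x b k c * Z x b c := by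
    rw [sum_comm]; exact sum_congr rfl fun _ _ => sum_comm
  have hcancel_b : ∑ b, ∑ c, ∑ k, Γ x b a k * Q x k d c * Z x b c
      = ∑ k, ∑ c, ∑ b, Γ x b a k * Q x k d c * Z x b c := by
    rw [sum_congr rfl fun _ _ => sum_comm, sum_comm]
    exact sum_congr rfl fun _ _ => sum_comm
  have hcancel_c : ∑ b, ∑ c, ∑ k, Γ x c a k * Q x b d k * Z x b c
      = ∑ b, ∑ k, ∑ c, Γ x c a k * Q x b d k * Z x b c :=
    sum_congr rfl fun _ _ => sum_comm
  simp only [covD1U, covD3U, covD2, pd_sum a _ fun b _ => DifferentiableAt.fun_sum fun c _ =>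
      (hQ b d c).fun_mul (hZ b c), pd_sum a _ fun c _ => (hQ _ d c).fun_mul (hZ _ c),
    pd_mul a (hQ _ d _) (hZ _ _), add_mul, mul_sub, sum_add_distrib,
    sum_sub_distrib, mul_sum, sum_mul] at horder hcancel_b hcancel_c ⊢
  simp only [mul_comm, mul_left_comm] at horder hcancel_b hcancel_c ⊢
  linear_combination horder - hcancel_b - hcancel_c

end Leibniz

theorem sum_sum_mul_eq_zero_of_symm_of_antisymm {ι : Type*} [Fintype ι] {A B : ι → ι → ℝ}
    (hA : ∀ i j, A i j = A j i) (hB : ∀ i j, B i j = -B j i) : ∑ i, ∑ j, A i j * B i j = 0 := by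
  have h : ∑ i, ∑ j, A i j * B i j = -∑ i, ∑ j, A i j * B i j := by
    conv_lhs => rw [sum_comm]
    simp only [← sum_neg_distrib]
    exact sum_congr rfl fun i _ => sum_congr rfl fun j _ => by rw [hA j i, hB j i]; ring
  linarith

theorem differentiableAt_of_smooth {U : Set (Fin m → ℝ)} (hU : IsOpen U) {f : Sc m}
    (hf : ContDiffOn ℝ (⊤ : ℕ∞) f U) {x : Fin m → ℝ} (hx : x ∈ U) :
    DifferentiableAt ℝ f x :=
  (hf.contDiffAt (hU.mem_nhds hx)).differentiableAt (by simp)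

section MetricData

variable {U : Set (Fin m → ℝ)} {γ : Ten m} {ℓ : Vec m} {ℓ2 : Sc m} {P : Ten m} {n : Vec m}
  {n2 : Sc m}

theorem MetricData.γ_symm (hdata : MetricData U γ ℓ ℓ2 P n n2) :
    ∀ y ∈ U, ∀ a b, γ y a b = γ y b a :=
  hdata.2.2.2.2.2.2.1

theorem MetricData.P_symm (hdata : MetricData U γ ℓ ℓ2 P n n2) :
    ∀ y ∈ U, ∀ a b, P y a b = P y b a :=
  hdata.2.2.2.2.2.2.2.1

theorem MetricData.invBlocks (hdata : MetricData U γ ℓ ℓ2 P n n2) :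
    ∀ y ∈ U, InvBlocks (γ y) (ℓ y) (ℓ2 y) (P y) (n y) (n2 y) :=
  hdata.2.2.2.2.2.2.2.2

theorem MetricData.differentiableAt (hU : IsOpen U) (hdata : MetricData U γ ℓ ℓ2 P n n2)
    {x : Fin m → ℝ} (hx : x ∈ U) :
    (∀ i j, DifferentiableAt ℝ (fun y => γ y i j) x) ∧ (∀ i, DifferentiableAt ℝ (fun y => ℓ y i) x)
      ∧ DifferentiableAt ℝ ℓ2 x ∧ (∀ i j, DifferentiableAt ℝ (fun y => P y i j) x)
      ∧ (∀ i, DifferentiableAt ℝ (fun y => n y i) x) ∧ DifferentiableAt ℝ n2 x := by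
  obtain ⟨hγ, hℓ, hℓ2, hP, hn, hn2, -⟩ := hdata
  exact ⟨fun i j => differentiableAt_of_smooth hU (hγ i j) hx,
    fun i => differentiableAt_of_smooth hU (hℓ i) hx, differentiableAt_of_smooth hU hℓ2 hx,
    fun i j => differentiableAt_of_smooth hU (hP i j) hx,
    fun i => differentiableAt_of_smooth hU (hn i) hx, differentiableAt_of_smooth hU hn2 hx⟩

end MetricData

section InverseDerivative

def pdM {ι : Type*} (a : Fin m) (M : (Fin m → ℝ) → Matrix ι ι ℝ) (x : Fin m → ℝ) :
    Matrix ι ι ℝ :=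
  Matrix.of fun i j => pd a (fun y => M y i j) x

theorem pdM_mul {ι : Type*} [Fintype ι] (a : Fin m) {M N : (Fin m → ℝ) → Matrix ι ι ℝ}
    {x : Fin m → ℝ} (hM : ∀ i j, DifferentiableAt ℝ (fun y => M y i j) x)
    (hN : ∀ i j, DifferentiableAt ℝ (fun y => N y i j) x) :
    pdM a (fun y => M y * N y) x = pdM a M x * N x + M x * pdM a N x := by
  ext i j
  simp only [pdM, Matrix.mul_apply, Matrix.of_apply, Matrix.add_apply]
  rw [pd_sum a _ fun k _ => (hM i k).fun_mul (hN k j), ← sum_add_distrib]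
  exact sum_congr rfl fun k _ => pd_mul a (hM i k) (hN k j)

/-- The derivative of a matrix inverse: `dA`, `dB` stand for `∂A`, `∂(A⁻¹)`. -/
theorem eq_neg_mul_mul_of_mul_eq_one {ι : Type*} [Fintype ι] [DecidableEq ι]
    {A B dA dB : Matrix ι ι ℝ} (h : B * A = 1) (hd : dB * A + B * dA = 0) :
    dB = -(B * dA * B) := by
  have hAB : A * B = 1 := mul_eq_one_comm.mp h
  calc dB = (dB * A + B * dA) * B - B * dA * B := by
        rw [add_mul, Matrix.mul_assoc dB, hAB, Matrix.mul_one]; abel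
    _ = -(B * dA * B) := by rw [hd, Matrix.zero_mul, zero_sub]

theorem differentiableAt_blockA {γ : Ten m} {ℓ : Vec m} {ℓ2 : Sc m} {x : Fin m → ℝ}
    (hγ : ∀ i j, DifferentiableAt ℝ (fun y => γ y i j) x)
    (hℓ : ∀ i, DifferentiableAt ℝ (fun y => ℓ y i) x) (hℓ2 : DifferentiableAt ℝ ℓ2 x) :
    ∀ i j, DifferentiableAt ℝ (fun y => blockA γ ℓ ℓ2 y i j) x := by
  rintro (a | _) (b | _)
  exacts [hγ a b, hℓ a, hℓ b, hℓ2]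

theorem blockA_mul_blockA_eq_one {γ P : Ten m} {ℓ n : Vec m} {ℓ2 n2 : Sc m} {x : Fin m → ℝ}
    (hγ : ∀ a b, γ x a b = γ x b a) (h : InvBlocks (γ x) (ℓ x) (ℓ2 x) (P x) (n x) (n2 x)) :
    blockA P n n2 x * blockA γ ℓ ℓ2 x = 1 := by
  obtain ⟨h1, h2, h3, h4⟩ := h
  ext (a | _) (b | _)
  · simpa [Matrix.mul_apply, Fintype.sum_sum_type, blockA, Matrix.one_apply, kd] using h1 a b
  · simpa [Matrix.mul_apply, Fintype.sum_sum_type, blockA, mul_comm] using h2 a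
  · simpa [Matrix.mul_apply, Fintype.sum_sum_type, blockA, hγ _ b, mul_comm] using h4 b
  · simpa [Matrix.mul_apply, Fintype.sum_sum_type, blockA] using h3

variable {U : Set (Fin m → ℝ)} {γ : Ten m} {ℓ : Vec m} {ℓ2 : Sc m} {P : Ten m} {n : Vec m}
  {n2 : Sc m} {x : Fin m → ℝ}

theorem pdM_blockA_inv (hU : IsOpen U) (hdata : MetricData U γ ℓ ℓ2 P n n2) (hx : x ∈ U)
    (c : Fin m) :
    pdM c (blockA P n n2) x
      = -(blockA P n n2 x * pdM c (blockA γ ℓ ℓ2) x * blockA P n n2 x) := by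
  obtain ⟨hγ, hℓ, hℓ2, hP, hn, hn2⟩ := hdata.differentiableAt hU hx
  have hinv : ∀ y ∈ U, blockA P n n2 y * blockA γ ℓ ℓ2 y = 1 := fun y hy =>
    blockA_mul_blockA_eq_one (hdata.γ_symm y hy) (hdata.invBlocks y hy)
  refine eq_neg_mul_mul_of_mul_eq_one (hinv x hx) ?_
  rw [← pdM_mul c (differentiableAt_blockA hP hn hn2) (differentiableAt_blockA hγ hℓ hℓ2)]
  ext i j
  exact pd_of_eventually_const c (Filter.eventually_of_mem (hU.mem_nhds hx) fun y hy =>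
    congrFun (congrFun (hinv y hy) i) j)

theorem blockA_mul_pdM_blockA_inv (hU : IsOpen U) (hdata : MetricData U γ ℓ ℓ2 P n n2)
    (hx : x ∈ U) (c : Fin m) :
    blockA γ ℓ ℓ2 x * pdM c (blockA P n n2) x = -(pdM c (blockA γ ℓ ℓ2) x * blockA P n n2 x) := by
  have hAB : blockA γ ℓ ℓ2 x * blockA P n n2 x = 1 :=
    mul_eq_one_comm.mp (blockA_mul_blockA_eq_one (hdata.γ_symm x hx) (hdata.invBlocks x hx))
  rw [pdM_blockA_inv hU hdata hx, Matrix.mul_neg, ← Matrix.mul_assoc, ← Matrix.mul_assoc, hAB,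
    Matrix.one_mul]

theorem pd_P_eq (hU : IsOpen U) (hdata : MetricData U γ ℓ ℓ2 P n n2) (hx : x ∈ U)
    (c a b : Fin m) :
    pd c (fun y => P y a b) x
      = -(∑ j, (∑ i, P x a i * pd c (fun y => γ y i j) x + n x a * pd c (fun y => ℓ y j) x)
          * P x j b)
        - (∑ i, P x a i * pd c (fun y => ℓ y i) x + n x a * pd c ℓ2 x) * n x b := by
  have := congrFun (congrFun (pdM_blockA_inv hU hdata hx c) (.inl a)) (.inl b)
  simp only [pdM, blockA, Matrix.of_apply, Matrix.neg_apply, Matrix.mul_apply,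
    Fintype.sum_sum_type, univ_unique, sum_singleton] at this
  linear_combination this

theorem pd_n_eq (hU : IsOpen U) (hdata : MetricData U γ ℓ ℓ2 P n n2) (hx : x ∈ U)
    (c a : Fin m) :
    pd c (fun y => n y a) x
      = -(∑ j, (∑ i, P x a i * pd c (fun y => γ y i j) x + n x a * pd c (fun y => ℓ y j) x)
          * n x j)
        - (∑ i, P x a i * pd c (fun y => ℓ y i) x + n x a * pd c ℓ2 x) * n2 x := by
  have := congrFun (congrFun (pdM_blockA_inv hU hdata hx c) (.inl a)) (.inr ())
  simp only [pdM, blockA, Matrix.of_apply, Matrix.neg_apply, Matrix.mul_apply,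
    Fintype.sum_sum_type, univ_unique, sum_singleton] at this
  linear_combination this

theorem pd_n2_eq (hU : IsOpen U) (hdata : MetricData U γ ℓ ℓ2 P n n2) (hx : x ∈ U)
    (c : Fin m) :
    pd c n2 x
      = -(∑ j, (∑ i, n x i * pd c (fun y => γ y i j) x + n2 x * pd c (fun y => ℓ y j) x)
          * n x j)
        - (∑ i, n x i * pd c (fun y => ℓ y i) x + n2 x * pd c ℓ2 x) * n2 x := by
  have := congrFun (congrFun (pdM_blockA_inv hU hdata hx c) (.inr ())) (.inr ())
  simp only [pdM, blockA, Matrix.of_apply, Matrix.neg_apply, Matrix.mul_apply,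
    Fintype.sum_sum_type, univ_unique, sum_singleton] at this
  linear_combination this

theorem sum_γ_mul_pd_n_add_ℓ_mul_pd_n2 (hU : IsOpen U) (hdata : MetricData U γ ℓ ℓ2 P n n2)
    (hx : x ∈ U) (c a : Fin m) :
    ∑ j, γ x a j * pd c (fun y => n y j) x + ℓ x a * pd c n2 x
      = -(∑ j, pd c (fun y => γ y a j) x * n x j) - pd c (fun y => ℓ y a) x * n2 x := by
  have := congrFun (congrFun (blockA_mul_pdM_blockA_inv hU hdata hx c) (.inl a)) (.inr ())
  simp only [pdM, blockA, Matrix.of_apply, Matrix.neg_apply, Matrix.mul_apply,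
    Fintype.sum_sum_type, univ_unique, sum_singleton] at this
  linear_combination this

end InverseDerivative

section Christoffel

/-- Christoffel symbols of the first kind, `christoffel1 γ x d a b = Γ_{d,ab}`. -/
def christoffel1 (γ : Ten m) (x : Fin m → ℝ) (d a b : Fin m) : ℝ :=
  (pd a (fun y => γ y b d) x + pd b (fun y => γ y a d) x - pd d (fun y => γ y a b) x) / 2

def Sf (ℓ : Vec m) (x : Fin m → ℝ) (a b : Fin m) : ℝ :=
  (pd a (fun y => ℓ y b) x + pd b (fun y => ℓ y a) x) / 2

theorem Gam0_eq (γ : Ten m) (ℓ : Vec m) (P : Ten m) (n : Vec m) (x : Fin m → ℝ)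
    (c a b : Fin m) :
    Gam0 γ ℓ P n x c a b = ∑ d, P x c d * christoffel1 γ x d a b + n x c * Sf ℓ x a b := by
  simp only [Gam0, christoffel1, Sf, sum_div, mul_div_assoc]

theorem pd_ℓ_eq_Ff_add_Sf (ℓ : Vec m) (x : Fin m → ℝ) (a b : Fin m) :
    pd a (fun y => ℓ y b) x = Ff ℓ x a b + Sf ℓ x a b := by
  simp only [Ff, Sf]; ring

theorem Ff_antisymm (ℓ : Vec m) (x : Fin m → ℝ) (a b : Fin m) : Ff ℓ x a b = -Ff ℓ x b a := by
  simp only [Ff]; ring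

variable {U : Set (Fin m → ℝ)} {γ : Ten m} {x : Fin m → ℝ}

theorem pd_symm_of_symm (hU : IsOpen U) (hγ : ∀ y ∈ U, ∀ a b, γ y a b = γ y b a) (hx : x ∈ U)
    (c a b : Fin m) :
    pd c (fun y => γ y a b) x = pd c (fun y => γ y b a) x :=
  pd_congr c (Filter.eventually_of_mem (hU.mem_nhds hx) fun y hy => hγ y hy a b)

theorem pd_eq_christoffel1_add (hU : IsOpen U) (hγ : ∀ y ∈ U, ∀ a b, γ y a b = γ y b a)
    (hx : x ∈ U) (c a b : Fin m) :
    pd c (fun y => γ y a b) x = christoffel1 γ x b c a + christoffel1 γ x a c b := by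
  rw [christoffel1, christoffel1, pd_symm_of_symm hU hγ hx c b a]; ring

theorem christoffel1_symm (hU : IsOpen U) (hγ : ∀ y ∈ U, ∀ a b, γ y a b = γ y b a) (hx : x ∈ U)
    (d a b : Fin m) :
    christoffel1 γ x d a b = christoffel1 γ x d b a := by
  rw [christoffel1, christoffel1, pd_symm_of_symm hU hγ hx d a b]; ring

end Christoffel

section BasicFormulas

variable {U : Set (Fin m → ℝ)} {γ : Ten m} {ℓ : Vec m} {ℓ2 : Sc m} {P : Ten m} {n : Vec m}
  {n2 : Sc m} {x : Fin m → ℝ}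

local notation "Γ̊" => Gam0 γ ℓ P n

theorem Uf_eq (hU : IsOpen U) (hdata : MetricData U γ ℓ ℓ2 P n n2) (hx : x ∈ U) (a b : Fin m) :
    Uf γ ℓ n n2 x a b = -(∑ e, n x e * christoffel1 γ x e a b) - n2 x * Sf ℓ x a b := by
  have hγ : ∑ c, γ x c b * pd a (fun y => n y c) x = ∑ c, γ x b c * pd a (fun y => n y c) x :=
    sum_congr rfl fun c _ => by rw [hdata.γ_symm x hx c b]
  have ha := sum_γ_mul_pd_n_add_ℓ_mul_pd_n2 hU hdata hx b a
  have hb := sum_γ_mul_pd_n_add_ℓ_mul_pd_n2 hU hdata hx a b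
  simp only [Uf, christoffel1, Sf, mul_div_assoc', ← sum_div]
  simp only [mul_add, mul_sub, sum_add_distrib, sum_sub_distrib] at hγ ha hb ⊢
  simp only [mul_comm] at hγ ha hb ⊢
  linear_combination (ha + hb + hγ) / 2

theorem Uf_symm (hU : IsOpen U) (hdata : MetricData U γ ℓ ℓ2 P n n2) (hx : x ∈ U) (a b : Fin m) :
    Uf γ ℓ n n2 x a b = Uf γ ℓ n n2 x b a := by
  have hS : Sf ℓ x a b = Sf ℓ x b a := by simp only [Sf]; ring
  simp only [Uf_eq hU hdata hx, christoffel1_symm hU hdata.γ_symm hx _ a b, hS]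

theorem pd_n2_eq_Ff_Uf (hU : IsOpen U) (hdata : MetricData U γ ℓ ℓ2 P n n2) (hx : x ∈ U)
    (c : Fin m) :
    pd c n2 x = -(n2 x * (2 * (∑ f, Ff ℓ x c f * n x f) + n2 x * pd c ℓ2 x))
      + 2 * ∑ f, n x f * Uf γ ℓ n n2 x c f := by
  have hswap : ∑ j, ∑ i, n x i * n x j * christoffel1 γ x j c i
      = ∑ j, ∑ i, n x j * n x i * christoffel1 γ x i c j := sum_comm
  rw [pd_n2_eq hU hdata hx]
  simp only [Uf_eq hU hdata hx, pd_eq_christoffel1_add hU hdata.γ_symm hx, pd_ℓ_eq_Ff_add_Sf,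
    two_mul]
  simp only [mul_add, add_mul, mul_sub, mul_neg, sum_add_distrib, sum_sub_distrib,
    sum_neg_distrib, mul_sum, sum_mul] at hswap ⊢
  simp only [mul_comm, mul_left_comm, mul_assoc] at hswap ⊢
  linear_combination -hswap

theorem covD1U_Gam0_n (hU : IsOpen U) (hdata : MetricData U γ ℓ ℓ2 P n n2) (hx : x ∈ U)
    (c b : Fin m) :
    covD1U Γ̊ n x c b
      = -(n x b * (∑ f, Ff ℓ x c f * n x f + n2 x * pd c ℓ2 x))
        + ∑ f, P x b f * Uf γ ℓ n n2 x c f - n2 x * ∑ f, P x b f * Ff ℓ x c f := by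
  have hswap : ∑ j, ∑ i, P x b i * n x j * christoffel1 γ x j c i
      = ∑ i, ∑ j, P x b i * n x j * christoffel1 γ x j c i := sum_comm
  rw [covD1U, pd_n_eq hU hdata hx]
  simp only [Gam0_eq, Uf_eq hU hdata hx, pd_eq_christoffel1_add hU hdata.γ_symm hx,
    pd_ℓ_eq_Ff_add_Sf]
  simp only [mul_add, add_mul, mul_sub, mul_neg, sum_add_distrib, sum_sub_distrib,
    sum_neg_distrib, mul_sum, sum_mul] at hswap ⊢
  simp only [mul_comm, mul_left_comm, mul_assoc] at hswap ⊢
  linear_combination -hswap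

theorem covD2U_Gam0_P (hU : IsOpen U) (hdata : MetricData U γ ℓ ℓ2 P n n2) (hx : x ∈ U)
    (c b d : Fin m) :
    covD2U Γ̊ P x c b d
      = -(n x b * n x d * pd c ℓ2 x) - n x b * (∑ f, P x d f * Ff ℓ x c f)
        - n x d * ∑ f, P x b f * Ff ℓ x c f := by
  have hP := hdata.P_symm x hx
  have hswap : ∑ f, ∑ e, P x d e * christoffel1 γ x e c f * P x b f
      = ∑ j, ∑ i, P x b i * christoffel1 γ x j c i * P x d j := by
    rw [sum_comm]; exact sum_congr rfl fun _ _ => sum_congr rfl fun _ _ => by ring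
  rw [covD2U, pd_P_eq hU hdata hx]
  simp only [Gam0_eq, pd_eq_christoffel1_add hU hdata.γ_symm hx, pd_ℓ_eq_Ff_add_Sf, hP _ d]
  simp only [mul_add, add_mul, sum_add_distrib, mul_sum, sum_mul] at hswap ⊢
  simp only [mul_comm, mul_left_comm, mul_assoc] at hswap ⊢
  linear_combination hswap

end BasicFormulas

section Identities

variable {U : Set (Fin m → ℝ)} {γ : Ten m} {ℓ : Vec m} {ℓ2 : Sc m} {P : Ten m} {n : Vec m}
  {n2 : Sc m} {x : Fin m → ℝ}

local notation "Γ̊" => Gam0 γ ℓ P n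

theorem covD2U_Gam0_n2P_sub_nn (hU : IsOpen U) (hdata : MetricData U γ ℓ ℓ2 P n n2) (hx : x ∈ U)
    (c b d : Fin m) :
    covD2U Γ̊ (fun y b' d' => n2 y * P y b' d' - n y b' * n y d') x c b d
      = -((n2 x * P x b d - n x b * n x d)
          * (2 * (∑ f, Ff ℓ x c f * n x f) + n2 x * pd c ℓ2 x))
        + ∑ f, Uf γ ℓ n n2 x c f * (2 * n x f * P x b d - P x b f * n x d - P x d f * n x b) := by
  obtain ⟨-, -, -, hP, hn, hn2⟩ := hdata.differentiableAt hU hx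
  rw [covD2U_sub _ (fun i j => hn2.fun_mul (hP i j)) (fun i j => (hn i).fun_mul (hn j)),
    covD2U_mul_left _ hn2 hP, covD2U_tmul _ hn hn, covD2U_Gam0_P hU hdata hx,
    covD1U_Gam0_n hU hdata hx, covD1U_Gam0_n hU hdata hx, pd_n2_eq_Ff_Uf hU hdata hx]
  simp only [two_mul, mul_add, add_mul, mul_sub, sub_mul, neg_mul, mul_neg, sum_add_distrib,
    sum_sub_distrib, mul_sum, sum_mul]
  simp only [mul_comm, mul_left_comm, mul_assoc]
  ring

theorem sum_covD3U_Gam0_Pn_sub_Pn (hU : IsOpen U) (hdata : MetricData U γ ℓ ℓ2 P n n2)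
    (hx : x ∈ U) (b c : Fin m) :
    ∑ d, covD3U Γ̊ (fun y i j k => P y i j * n y k - P y i k * n y j) x d b d c
      = (∑ d, n2 x * pd d ℓ2 x * (P x b c * n x d - P x b d * n x c))
        + (∑ d, ∑ f, Ff ℓ x d f
          * (n x b * n x d * P x c f - P x b d * n x c * n x f - n2 x * P x b d * P x c f))
        + (∑ d, ∑ f, Uf γ ℓ n n2 x d f * (P x b d * P x c f - P x b c * P x d f)) := by
  obtain ⟨-, -, -, hP, hn, -⟩ := hdata.differentiableAt hU hx
  have hPs := hdata.P_symm x hx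
  have hvanish₁ := sum_sum_mul_eq_zero_of_symm_of_antisymm
    (A := fun d f => n x b * n x c * P x d f) (fun i j => by rw [hPs i j]) (Ff_antisymm ℓ x)
  have hvanish₂ := sum_sum_mul_eq_zero_of_symm_of_antisymm
    (A := fun d f => P x b c * n x d * n x f) (fun i j => by ring) (Ff_antisymm ℓ x)
  have hvanish₃ := sum_sum_mul_eq_zero_of_symm_of_antisymm
    (A := fun d f => n2 x * P x b c * P x d f) (fun i j => by rw [hPs i j]) (Ff_antisymm ℓ x)
  simp only [covD3U_tmul_sub_tmul _ hP hn, covD2U_Gam0_P hU hdata hx, covD1U_Gam0_n hU hdata hx]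
  simp only [mul_add, mul_sub, sub_mul, neg_mul, mul_neg, sum_add_distrib,
    sum_sub_distrib, sum_neg_distrib, mul_sum, sum_mul] at hvanish₁ hvanish₂ hvanish₃ ⊢
  simp only [mul_comm, mul_left_comm, mul_assoc] at hvanish₁ hvanish₂ hvanish₃ ⊢
  linear_combination -hvanish₁ + hvanish₂ + hvanish₃

theorem sum_covD2_antisymm_mul_n2P_sub_nn (hU : IsOpen U) (hdata : MetricData U γ ℓ ℓ2 P n n2)
    (hx : x ∈ U) {Z : Ten m} (hZ : ∀ i j, DifferentiableAt ℝ (fun y => Z y i j) x)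
    (hZs : ∀ a b, Z x a b = Z x b a) (c : Fin m) :
    (∑ b, ∑ d, (covD2 Γ̊ Z x d b c - covD2 Γ̊ Z x c b d)
        * (n2 x * P x b d - n x b * n x d))
      = (∑ f, covD11 Γ̊
          (fun y f' c' => ∑ b, ∑ d, (n2 y * P y b d - n y b * n y d)
            * (kd f' d * Z y b c' - kd f' c' * Z y b d)) x f f c)
        + (∑ b, ∑ d, (n2 x * P x b d - n x b * n x d)
          * (Z x b c * (2 * (∑ f, Ff ℓ x d f * n x f) + n2 x * pd d ℓ2 x)
            - Z x b d * (2 * (∑ f, Ff ℓ x c f * n x f) + n2 x * pd c ℓ2 x)))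
        + (∑ b, ∑ d, ∑ f, (P x d f * n x b - P x b d * n x f)
          * (Z x b c * Uf γ ℓ n n2 x d f - 2 * Z x b d * Uf γ ℓ n n2 x c f)) := by
  obtain ⟨-, -, -, hP, hn, hn2⟩ := hdata.differentiableAt hU hx
  have hT : ∀ i j, DifferentiableAt ℝ (fun y => n2 y * P y i j - n y i * n y j) x :=
    fun i j => (hn2.fun_mul (hP i j)).fun_sub ((hn i).fun_mul (hn j))
  have hvanish₁ :
      ∑ b, Z x b c * ∑ d, ∑ f, Uf γ ℓ n n2 x d f * (n x f * P x b d - P x b f * n x d) = 0 :=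
    sum_eq_zero fun b _ => by
      rw [sum_sum_mul_eq_zero_of_symm_of_antisymm (Uf_symm hU hdata hx) (fun _ _ => by ring),
        mul_zero]
  have hvanish₂ :
      ∑ b, ∑ d, Z x b d * ∑ f, Uf γ ℓ n n2 x c f * (P x b f * n x d - P x d f * n x b) = 0 :=
    sum_sum_mul_eq_zero_of_symm_of_antisymm hZs fun _ _ => by
      rw [← sum_neg_distrib]; exact sum_congr rfl fun _ _ => by ring
  rw [sum_covD11_sum_sum_mul_kd _ hT hZ c]
  simp only [covD2U_Gam0_n2P_sub_nn hU hdata hx]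
  simp only [two_mul, mul_add, add_mul, mul_sub, sub_mul, neg_mul, sum_add_distrib,
    sum_sub_distrib, sum_neg_distrib, mul_sum, sum_mul] at hvanish₁ hvanish₂ ⊢
  simp only [mul_comm, mul_left_comm, mul_assoc] at hvanish₁ hvanish₂ ⊢
  linear_combination -hvanish₁ - hvanish₂

theorem sum_covD2_antisymm_mul_P_n (hU : IsOpen U) (hdata : MetricData U γ ℓ ℓ2 P n n2)
    (hx : x ∈ U) {Z : Ten m} (hZ : ∀ i j, DifferentiableAt ℝ (fun y => Z y i j) x)
    (hZs : ∀ a b, Z x a b = Z x b a) :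
    (∑ b, ∑ c, ∑ d,
        (covD2 Γ̊ Z x d b c - covD2 Γ̊ Z x c b d) * P x b d * n x c)
      = (∑ d, covD1U Γ̊
          (fun y d' => ∑ b, ∑ c, (P y b d' * n y c - P y b c * n y d') * Z y b c) x d d)
        + ∑ b, ∑ c, Z x b c
          * ((∑ d, ∑ f, Uf γ ℓ n n2 x d f * (P x b c * P x d f - P x b d * P x c f))
            + 2 * (∑ d, ∑ f, Ff ℓ x d f * P x b d * n x c * n x f)
            + (∑ d, n2 x * pd d ℓ2 x * (P x b d * n x c - P x b c * n x d))) := by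
  obtain ⟨-, -, -, hP, hn, -⟩ := hdata.differentiableAt hU hx
  have hQ : ∀ i j k, DifferentiableAt ℝ (fun y => P y i j * n y k - P y i k * n y j) x :=
    fun i j k => ((hP i j).fun_mul (hn k)).fun_sub ((hP i k).fun_mul (hn j))
  have hLHS : (∑ b, ∑ c, ∑ d, (covD2 Γ̊ Z x d b c - covD2 Γ̊ Z x c b d) * P x b d * n x c)
      = ∑ b, ∑ c, ∑ d, (P x b d * n x c - P x b c * n x d) * covD2 Γ̊ Z x d b c := by
    have hswap : ∑ b, ∑ c, ∑ d, covD2 Γ̊ Z x c b d * P x b d * n x c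
        = ∑ b, ∑ c, ∑ d, P x b c * n x d * covD2 Γ̊ Z x d b c :=
      sum_congr rfl fun _ _ => by
        rw [sum_comm]; exact sum_congr rfl fun _ _ => sum_congr rfl fun _ _ => by ring
    simp only [sub_mul, sum_sub_distrib, hswap]
    congr 1
    exact sum_congr rfl fun _ _ => sum_congr rfl fun _ _ => sum_congr rfl fun _ _ => by ring
  have hdiv : (∑ d, covD1U Γ̊
        (fun y d' => ∑ b, ∑ c, (P y b d' * n y c - P y b c * n y d') * Z y b c) x d d)
      = (∑ b, ∑ c, (∑ d, covD3U Γ̊ (fun y i j k => P y i j * n y k - P y i k * n y j) x d b d c)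
          * Z x b c)
        + ∑ b, ∑ c, ∑ d, (P x b d * n x c - P x b c * n x d) * covD2 Γ̊ Z x d b c := by
    simp only [covD1U_sum_sum_mul _ hQ hZ, sum_mul, ← sum_add_distrib]
    rw [sum_comm]
    exact sum_congr rfl fun _ _ => by rw [sum_comm]
  have hvanish : ∑ b, ∑ c, Z x b c * ∑ d, ∑ f, Ff ℓ x d f
      * (n x b * n x d * P x c f + P x b d * n x c * n x f - n2 x * P x b d * P x c f) = 0 :=
    sum_sum_mul_eq_zero_of_symm_of_antisymm hZs fun b c => by
      rw [sum_comm, ← sum_neg_distrib]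
      exact sum_congr rfl fun d _ => by
        rw [← sum_neg_distrib]
        exact sum_congr rfl fun f _ => by rw [Ff_antisymm ℓ x f d]; ring
  rw [hLHS, hdiv]
  simp only [sum_covD3U_Gam0_Pn_sub_Pn hU hdata hx]
  simp only [two_mul, mul_add, add_mul, mul_sub, sub_mul, sum_add_distrib, sum_sub_distrib,
    mul_sum, sum_mul] at hvanish ⊢
  simp only [mul_comm, mul_left_comm, mul_assoc] at hvanish ⊢
  linear_combination -hvanish

end Identities

end HypData

open HypData in
theorem statement12_general (m : ℕ) (U : Set (Fin m → ℝ)) (hU : IsOpen U)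
    (γ : Ten m) (ℓ : Vec m) (ℓ2 : Sc m) (P : Ten m) (n : Vec m) (n2 : Sc m)
    (hdata : MetricData U γ ℓ ℓ2 P n n2) :
    -- (1)
    ((∀ x ∈ U, ∀ c b d,
      covD2U (Gam0 γ ℓ P n) (fun y b' d' => n2 y * P y b' d' - n y b' * n y d')
          x c b d
        = -((n2 x * P x b d - n x b * n x d)
            * (2 * (∑ f, Ff ℓ x c f * n x f) + n2 x * pd c ℓ2 x))
          + ∑ f, Uf γ ℓ n n2 x c f
            * (2 * n x f * P x b d - P x b f * n x d - P x d f * n x b))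
    -- (2)
    ∧ (∀ x ∈ U, ∀ b c,
      (∑ d, covD3U (Gam0 γ ℓ P n)
          (fun y i j k => P y i j * n y k - P y i k * n y j) x d b d c)
        = (∑ d, n2 x * pd d ℓ2 x * (P x b c * n x d - P x b d * n x c))
          + (∑ d, ∑ f, Ff ℓ x d f
            * (n x b * n x d * P x c f - P x b d * n x c * n x f
              - n2 x * P x b d * P x c f))
          + (∑ d, ∑ f, Uf γ ℓ n n2 x d f
            * (P x b d * P x c f - P x b c * P x d f)))
    -- (3)
    ∧ (∀ Z : Ten m, SmTen U Z → (∀ x ∈ U, ∀ a b, Z x a b = Z x b a) →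
      ∀ x ∈ U, ∀ c,
      (∑ b, ∑ d,
        (covD2 (Gam0 γ ℓ P n) Z x d b c - covD2 (Gam0 γ ℓ P n) Z x c b d)
          * (n2 x * P x b d - n x b * n x d))
        = (∑ f, covD11 (Gam0 γ ℓ P n)
            (fun y f' c' => ∑ b, ∑ d, (n2 y * P y b d - n y b * n y d)
              * (kd f' d * Z y b c' - kd f' c' * Z y b d)) x f f c)
          + (∑ b, ∑ d, (n2 x * P x b d - n x b * n x d)
            * (Z x b c * (2 * (∑ f, Ff ℓ x d f * n x f) + n2 x * pd d ℓ2 x)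
              - Z x b d * (2 * (∑ f, Ff ℓ x c f * n x f) + n2 x * pd c ℓ2 x)))
          + (∑ b, ∑ d, ∑ f, (P x d f * n x b - P x b d * n x f)
            * (Z x b c * Uf γ ℓ n n2 x d f - 2 * Z x b d * Uf γ ℓ n n2 x c f)))
    -- (4)
    ∧ (∀ Z : Ten m, SmTen U Z → (∀ x ∈ U, ∀ a b, Z x a b = Z x b a) →
      ∀ x ∈ U,
      (∑ b, ∑ c, ∑ d,
        (covD2 (Gam0 γ ℓ P n) Z x d b c - covD2 (Gam0 γ ℓ P n) Z x c b d)
          * P x b d * n x c)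
        = (∑ d, covD1U (Gam0 γ ℓ P n)
            (fun y d' => ∑ b, ∑ c, (P y b d' * n y c - P y b c * n y d') * Z y b c)
            x d d)
          + ∑ b, ∑ c, Z x b c
            * ((∑ d, ∑ f, Uf γ ℓ n n2 x d f
                * (P x b c * P x d f - P x b d * P x c f))
              + 2 * (∑ d, ∑ f, Ff ℓ x d f * P x b d * n x c * n x f)
              + (∑ d, n2 x * pd d ℓ2 x * (P x b d * n x c - P x b c * n x d))))) :=
  ⟨fun _ hx c b d => covD2U_Gam0_n2P_sub_nn hU hdata hx c b d,
    fun _ hx b c => sum_covD3U_Gam0_Pn_sub_Pn hU hdata hx b c,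
    fun _ hZ hZs x hx c => sum_covD2_antisymm_mul_n2P_sub_nn hU hdata hx
      (fun i j => differentiableAt_of_smooth hU (hZ i j) hx) (hZs x hx) c,
    fun _ hZ hZs x hx => sum_covD2_antisymm_mul_P_n hU hdata hx
      (fun i j => differentiableAt_of_smooth hU (hZ i j) hx) (hZs x hx)⟩

open HypData in
/-- Lemma 7 of the paper, further `∇̊`-identities involving
`n⁽²⁾P^{bd} − n^bn^d` and `P^{bd}n^c − P^{bc}n^d`. -/
theorem statement12 (m : ℕ) (hm : 1 ≤ m) (U : Set (Fin m → ℝ)) (hU : IsOpen U)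
    (γ : Ten m) (ℓ : Vec m) (ℓ2 : Sc m) (P : Ten m) (n : Vec m) (n2 : Sc m)
    (hdata : MetricData U γ ℓ ℓ2 P n n2) :
    -- (1)
    ((∀ x ∈ U, ∀ c b d,
      covD2U (Gam0 γ ℓ P n) (fun y b' d' => n2 y * P y b' d' - n y b' * n y d')
          x c b d
        = -((n2 x * P x b d - n x b * n x d)
            * (2 * (∑ f, Ff ℓ x c f * n x f) + n2 x * pd c ℓ2 x))
          + ∑ f, Uf γ ℓ n n2 x c f
            * (2 * n x f * P x b d - P x b f * n x d - P x d f * n x b))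
    -- (2)
    ∧ (∀ x ∈ U, ∀ b c,
      (∑ d, covD3U (Gam0 γ ℓ P n)
          (fun y i j k => P y i j * n y k - P y i k * n y j) x d b d c)
        = (∑ d, n2 x * pd d ℓ2 x * (P x b c * n x d - P x b d * n x c))
          + (∑ d, ∑ f, Ff ℓ x d f
            * (n x b * n x d * P x c f - P x b d * n x c * n x f
              - n2 x * P x b d * P x c f))
          + (∑ d, ∑ f, Uf γ ℓ n n2 x d f
            * (P x b d * P x c f - P x b c * P x d f)))
    -- (3)
    ∧ (∀ Z : Ten m, SmTen U Z → (∀ x ∈ U, ∀ a b, Z x a b = Z x b a) →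
      ∀ x ∈ U, ∀ c,
      (∑ b, ∑ d,
        (covD2 (Gam0 γ ℓ P n) Z x d b c - covD2 (Gam0 γ ℓ P n) Z x c b d)
          * (n2 x * P x b d - n x b * n x d))
        = (∑ f, covD11 (Gam0 γ ℓ P n)
            (fun y f' c' => ∑ b, ∑ d, (n2 y * P y b d - n y b * n y d)
              * (kd f' d * Z y b c' - kd f' c' * Z y b d)) x f f c)
          + (∑ b, ∑ d, (n2 x * P x b d - n x b * n x d)
            * (Z x b c * (2 * (∑ f, Ff ℓ x d f * n x f) + n2 x * pd d ℓ2 x)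
              - Z x b d * (2 * (∑ f, Ff ℓ x c f * n x f) + n2 x * pd c ℓ2 x)))
          + (∑ b, ∑ d, ∑ f, (P x d f * n x b - P x b d * n x f)
            * (Z x b c * Uf γ ℓ n n2 x d f - 2 * Z x b d * Uf γ ℓ n n2 x c f)))
    -- (4)
    ∧ (∀ Z : Ten m, SmTen U Z → (∀ x ∈ U, ∀ a b, Z x a b = Z x b a) →
      ∀ x ∈ U,
      (∑ b, ∑ c, ∑ d,
        (covD2 (Gam0 γ ℓ P n) Z x d b c - covD2 (Gam0 γ ℓ P n) Z x c b d)
          * P x b d * n x c)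
        = (∑ d, covD1U (Gam0 γ ℓ P n)
            (fun y d' => ∑ b, ∑ c, (P y b d' * n y c - P y b c * n y d') * Z y b c)
            x d d)
          + ∑ b, ∑ c, Z x b c
            * ((∑ d, ∑ f, Uf γ ℓ n n2 x d f
                * (P x b c * P x d f - P x b d * P x c f))
              + 2 * (∑ d, ∑ f, Ff ℓ x d f * P x b d * n x c * n x f)
              + (∑ d, n2 x * pd d ℓ2 x * (P x b d * n x c - P x b c * n x d))))) :=
  statement12_general m U hU γ ℓ ℓ2 P n n2 hdata
end
end

section
/- Let (γ, ℓ, ℓ⁽²⁾) be pointwise hypersurface metric data with inverse blocks (P, n, n⁽²⁾) and let V = (V_{ab}) be an arbitrary symmetric m×m matrix. Define τ^f_c := −(n⁽²⁾P^{bd} − n^bn^d)(δ^f_dV_{bc} − δ^f_cV_{bd}) and T^f := (P^{bf}n^c − P^{bc}n^f)V_{bc}. Then n^c τ^f_c + n⁽²⁾ T^f = 0 for every f. Consequently there exists a (unique) matrix τ^{fa} with τ^{fa}γ_{ac} = τ^f_c and τ^{fa}ℓ_a = T^f, and it is given explicitly by τ^{fa} = (n^fP^{ac} + n^aP^{fc})n^dV_{cd}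 − (n⁽²⁾P^{fc}P^{ad} + P^{fa}n^cn^d)V_{cd} + (n⁽²⁾P^{fa} − n^fn^a)P^{cd}V_{cd}. -/
/-!
In matrix form the inverse-block relations read `P γ + n ℓᵀ = 1`, `P ℓ = -ℓ⁽²⁾ n`,
`n·ℓ + n⁽²⁾ ℓ⁽²⁾ = 1` and `γ n = -n⁽²⁾ ℓ`; with `γ`, `P` symmetric also `γ P + ℓ nᵀ = 1`.
Hence every `σ` is recovered from `σγ` and `σℓ` as `σ = (σγ) P + (σℓ) nᵀ`, and conversely a
pair `(M, T)` is of the form `(σγ, σℓ)` as soon as `M n + n⁽²⁾ T = 0`. For `M = τ^f_c`,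
`T = T^f` this compatibility is a direct cancellation, and `M P + T nᵀ` expands, by the symmetry
of `P` and `V`, to the stated formula for `τ^{fa}`.
-/

open scoped BigOperators

noncomputable section

open Matrix

namespace HypData

variable {m : ℕ}

section InverseBlocks

variable {γ P : Fin m → Fin m → ℝ} {ℓ n : Fin m → ℝ} {ℓ2 n2 : ℝ}

theorem InvBlocks.P_mul_γ_add_vecMulVec_eq_one (h : InvBlocks γ ℓ ℓ2 P n n2) :
    of P * of γ + vecMulVec n ℓ = 1 := by
  ext a b
  simpa [mul_apply, vecMulVec_apply, one_apply, kd] using h.1 a b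

theorem InvBlocks.P_mulVec_ℓ_add_smul_eq_zero (h : InvBlocks γ ℓ ℓ2 P n n2) :
    of P *ᵥ ℓ + ℓ2 • n = 0 := by
  ext a
  simpa [mulVec, dotProduct] using h.2.1 a

theorem InvBlocks.γ_mulVec_n_add_smul_eq_zero (h : InvBlocks γ ℓ ℓ2 P n n2) :
    of γ *ᵥ n + n2 • ℓ = 0 := by
  ext a
  simpa [mulVec, dotProduct] using h.2.2.2 a

theorem InvBlocks.γ_mul_P_add_vecMulVec_eq_one (h : InvBlocks γ ℓ ℓ2 P n n2)
    (hγ : (of γ).IsSymm) (hP : (of P).IsSymm) : of γ * of P + vecMulVec ℓ n = 1 := by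
  simpa [transpose_mul, transpose_vecMulVec, hγ.eq, hP.eq] using
    congrArg transpose h.P_mul_γ_add_vecMulVec_eq_one

theorem InvBlocks.eq_mul_mul_add_vecMulVec (h : InvBlocks γ ℓ ℓ2 P n n2)
    (hγ : (of γ).IsSymm) (hP : (of P).IsSymm) (σ : Matrix (Fin m) (Fin m) ℝ) :
    σ = σ * of γ * of P + vecMulVec (σ *ᵥ ℓ) n := by
  conv_lhs => rw [← mul_one σ, ← h.γ_mul_P_add_vecMulVec_eq_one hγ hP]
  rw [mul_add, mul_vecMulVec, Matrix.mul_assoc]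

variable {M : Matrix (Fin m) (Fin m) ℝ} {T : Fin m → ℝ}

theorem InvBlocks.mul_add_vecMulVec_mul_γ (h : InvBlocks γ ℓ ℓ2 P n n2)
    (hγ : (of γ).IsSymm) (hc : M *ᵥ n + n2 • T = 0) :
    (M * of P + vecMulVec T n) * of γ = M := by
  have hnγ : n ᵥ* of γ = -(n2 • ℓ) := by
    rw [← mulVec_transpose, hγ.eq, eq_neg_iff_add_eq_zero, h.γ_mulVec_n_add_smul_eq_zero]
  have hPγ : of P * of γ = 1 - vecMulVec n ℓ := eq_sub_of_add_eq h.P_mul_γ_add_vecMulVec_eq_one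
  rw [add_mul, Matrix.mul_assoc, vecMulVec_mul, hnγ, hPγ, Matrix.mul_sub, Matrix.mul_one,
    mul_vecMulVec, vecMulVec_neg, vecMulVec_smul, ← smul_vecMulVec,
    ← sub_eq_add_neg, sub_sub, ← add_vecMulVec, hc, zero_vecMulVec, sub_zero]

theorem InvBlocks.mul_add_vecMulVec_mulVec_ℓ (h : InvBlocks γ ℓ ℓ2 P n n2)
    (hc : M *ᵥ n + n2 • T = 0) : (M * of P + vecMulVec T n) *ᵥ ℓ = T := by
  have hPℓ : of P *ᵥ ℓ = -(ℓ2 • n) :=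
    eq_neg_of_add_eq_zero_left h.P_mulVec_ℓ_add_smul_eq_zero
  have hnℓ : n ⬝ᵥ ℓ = 1 - n2 * ℓ2 := eq_sub_of_add_eq h.2.2.1
  rw [add_mulVec, ← mulVec_mulVec, hPℓ, vecMulVec_mulVec, hnℓ, op_smul_eq_smul,
    mulVec_neg, mulVec_smul]
  calc -(ℓ2 • M *ᵥ n) + (1 - n2 * ℓ2) • T = T - ℓ2 • (M *ᵥ n + n2 • T) := by module
    _ = T := by rw [hc, smul_zero, sub_zero]

end InverseBlocks

section ShellTensors

variable (P V : Fin m → Fin m → ℝ) (n : Fin m → ℝ) (n2 : ℝ)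

theorem tauVecP_eq :
    tauVecP P n V = (of P)ᵀ *ᵥ of V *ᵥ n - (of P * (of V)ᵀ).trace • n := by
  ext f
  simp only [tauVecP, sub_mul, Finset.sum_sub_distrib, Pi.sub_apply, Pi.smul_apply, smul_eq_mul,
    mulVec, dotProduct, trace, diag, mul_apply, transpose_apply, of_apply, Finset.mul_sum,
    Finset.sum_mul]
  simp only [mul_comm, mul_left_comm]

theorem of_tauMixP : of (tauMixP P n n2 V) =
    (n2 * (of P * (of V)ᵀ).trace - n ⬝ᵥ of V *ᵥ n) • 1 - n2 • ((of P)ᵀ * of V)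
      + vecMulVec n (n ᵥ* of V) := by
  ext f c
  simp only [tauMixP, kd, of_apply, mul_sub, Finset.sum_sub_distrib, mulVec, vecMul, dotProduct,
    trace, diag, mul_apply, transpose_apply, Matrix.add_apply, Matrix.sub_apply,
    Matrix.smul_apply, one_apply, vecMulVec_apply, smul_eq_mul, mul_ite, mul_one, mul_zero,
    Finset.sum_ite_eq, Finset.mem_univ, if_true, Finset.sum_ite_irrel, Finset.sum_const_zero,
    Finset.mul_sum, mul_comm, mul_left_comm]
  split_ifs <;> ring

theorem of_tauP : of (tauP P n n2 V) =
    vecMulVec n (of P *ᵥ of V *ᵥ n) + vecMulVec (of P *ᵥ of V *ᵥ n) n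
      - n2 • (of P * of V * (of P)ᵀ) - (n ⬝ᵥ of V *ᵥ n) • of P
      + (n2 * (of P * (of V)ᵀ).trace) • of P - (of P * (of V)ᵀ).trace • vecMulVec n n := by
  rw [Matrix.mul_assoc]
  ext f a
  simp only [tauP, of_apply, sub_mul, add_mul, Finset.sum_sub_distrib,
    Finset.sum_add_distrib, mulVec, dotProduct, trace, diag, mul_apply, transpose_apply,
    Matrix.add_apply, Matrix.sub_apply, Matrix.smul_apply, vecMulVec_apply, smul_eq_mul,
    Finset.mul_sum, Finset.sum_mul]
  simp only [mul_comm, mul_left_comm]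
  ring

theorem tauMixP_mulVec_add_smul_tauVecP :
    of (tauMixP P n n2 V) *ᵥ n + n2 • tauVecP P n V = 0 := by
  rw [of_tauMixP, tauVecP_eq, add_mulVec, sub_mulVec, smul_mulVec, smul_mulVec, one_mulVec,
    vecMulVec_mulVec, op_smul_eq_smul, ← dotProduct_mulVec, ← mulVec_mulVec]
  module

variable {P V} in
theorem tauMixP_mul_add_vecMulVec_tauVecP (hP : (of P).IsSymm) (hV : (of V).IsSymm) :
    of (tauMixP P n n2 V) * of P + vecMulVec (tauVecP P n V) n = of (tauP P n n2 V) := by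
  have hnVP : n ᵥ* of V ᵥ* of P = of P *ᵥ of V *ᵥ n := by
    rw [← mulVec_transpose, ← mulVec_transpose, hP.eq, hV.eq]
  rw [of_tauMixP, tauVecP_eq, of_tauP, hP.eq, add_mul, sub_mul, smul_mul, Matrix.one_mul,
    smul_mul, vecMulVec_mul, hnVP, sub_vecMulVec, smul_vecMulVec, Matrix.mul_assoc]
  module

end ShellTensors

end HypData

open HypData in
theorem statement16_general (m : ℕ)
    (γ : Fin m → Fin m → ℝ) (ℓ : Fin m → ℝ) (ℓ2 : ℝ)
    (P : Fin m → Fin m → ℝ) (n : Fin m → ℝ) (n2 : ℝ)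
    (hγs : ∀ a b, γ a b = γ b a) (hPs : ∀ a b, P a b = P b a)
    (hinv : InvBlocks γ ℓ ℓ2 P n n2)
    (V : Fin m → Fin m → ℝ) (hVs : ∀ a b, V a b = V b a) :
    -- n^c τ^f_c + n⁽²⁾ T^f = 0
    ((∀ f, (∑ c, n c * tauMixP P n n2 V f c) + n2 * tauVecP P n V f = 0)
    -- the explicit τ^{fa} lowers to τ^f_c and contracts to T^f
    ∧ (∀ f c, (∑ a, tauP P n n2 V f a * γ a c) = tauMixP P n n2 V f c)
    ∧ (∀ f, (∑ a, tauP P n n2 V f a * ℓ a) = tauVecP P n V f)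
    -- uniqueness
    ∧ (∀ τ' : Fin m → Fin m → ℝ,
        (∀ f c, (∑ a, τ' f a * γ a c) = tauMixP P n n2 V f c) →
        (∀ f, (∑ a, τ' f a * ℓ a) = tauVecP P n V f) →
        ∀ f a, τ' f a = tauP P n n2 V f a)) := by
  have hγ : (of γ).IsSymm := IsSymm.ext fun a b => hγs b a
  have hP : (of P).IsSymm := IsSymm.ext fun a b => hPs b a
  have hV : (of V).IsSymm := IsSymm.ext fun a b => hVs b a
  have hcompat := tauMixP_mulVec_add_smul_tauVecP P V n n2
  have hτ := tauMixP_mul_add_vecMulVec_tauVecP n n2 hP hV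
  have hlower := hinv.mul_add_vecMulVec_mul_γ hγ hcompat
  have hcontract := hinv.mul_add_vecMulVec_mulVec_ℓ hcompat
  rw [hτ] at hlower hcontract
  refine ⟨fun f => ?_, fun f c => congrFun (congrFun hlower f) c,
    fun f => congrFun hcontract f, fun τ' hγτ hℓτ f a => ?_⟩
  · simpa [mulVec, dotProduct, mul_comm] using congrFun hcompat f
  · have hrec := hinv.eq_mul_mul_add_vecMulVec hγ hP (of τ')
    rw [show of τ' * of γ = of (tauMixP P n n2 V) from ext hγτ,
      show of τ' *ᵥ ℓ = tauVecP P n V from funext hℓτ, hτ] at hrec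
    exact congrFun (congrFun hrec f) a

open HypData in
/-- Lemma 8 of the paper.  The tensors `τ^f_c` and `T^f` satisfy
`n^cτ^f_c + n⁽²⁾T^f = 0`, and they arise by lowering/contracting a unique tensor
`τ^{fa}`, given explicitly. -/
theorem statement16 (m : ℕ) (hm : 1 ≤ m)
    (γ : Fin m → Fin m → ℝ) (ℓ : Fin m → ℝ) (ℓ2 : ℝ)
    (P : Fin m → Fin m → ℝ) (n : Fin m → ℝ) (n2 : ℝ)
    (hγs : ∀ a b, γ a b = γ b a) (hPs : ∀ a b, P a b = P b a)
    (hinv : InvBlocks γ ℓ ℓ2 P n n2)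
    (V : Fin m → Fin m → ℝ) (hVs : ∀ a b, V a b = V b a) :
    -- n^c τ^f_c + n⁽²⁾ T^f = 0
    ((∀ f, (∑ c, n c * tauMixP P n n2 V f c) + n2 * tauVecP P n V f = 0)
    -- the explicit τ^{fa} lowers to τ^f_c and contracts to T^f
    ∧ (∀ f c, (∑ a, tauP P n n2 V f a * γ a c) = tauMixP P n n2 V f c)
    ∧ (∀ f, (∑ a, tauP P n n2 V f a * ℓ a) = tauVecP P n V f)
    -- uniqueness
    ∧ (∀ τ' : Fin m → Fin m → ℝ,
        (∀ f c, (∑ a, τ' f a * γ a c) = tauMixP P n n2 V f c) →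
        (∀ f, (∑ a, τ' f a * ℓ a) = tauVecP P n V f) →
        ∀ f a, τ' f a = tauP P n n2 V f a)) :=
  statement16_general m γ ℓ ℓ2 P n n2 hγs hPs hinv V hVs
end
end

section
/- Let m ≥ 2, let (γ, ℓ, ℓ⁽²⁾) be pointwise hypersurface metric data with inverse blocks (P, n, n⁽²⁾), let V = (V_{ab}) be a symmetric m×m matrix, and let τ^{fa} := (n^fP^{ac} + n^aP^{fc})n^dV_{cd} − (n⁽²⁾P^{fc}P^{ad} + P^{fa}n^cn^d)V_{cd} + (n⁽²⁾P^{fa} − n^fn^a)P^{cd}V_{cd} be the shell energy–momentum tensor. Then: (i) τ^{fa} = τ^{af}; (ii) if n⁽²⁾ ≠ 0 then τ^{fa} = 0 (for all f,a) if and only if V_{ab} = 0, while if n⁽²⁾ = 0 then τ^{fa} = 0 if and only if V_{ab}n^b = 0 for all a and P^{ab}V_{ab} = 0; (iii) for any u ≠ 0 and W = (W^a) ∈ ℝ^m, if τ'^{fa} denotes the same expression built from the gauge-transformed quantities V'_{ab} = uV_{ab}, P'^{ab} = P^{ab} + n⁽²⁾W^aW^b − W^an^b − W^bn^a, n'^a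 = u⁻¹(n^a − n⁽²⁾W^a), n⁽²⁾' = u⁻²n⁽²⁾, then τ'^{fa} = u⁻¹τ^{fa}; (iv) if ℓ_a = 0 for all a and ℓ⁽²⁾ = ε with ε ∈ {1, −1} (so that γ is invertible, P = γ⁻¹, n = 0, n⁽²⁾ = ε) and V_{ab} = ε[K_{ab}] for a symmetric matrix [K_{ab}], then τ^{ab} = −γ^{ac}γ^{bd}[K_{cd}] + γ^{ab}γ^{cd}[K_{cd}], where γ^{ab} are the entries of γ⁻¹. -/
open scoped BigOperators

noncomputable section

/-!
Write `Q = P V n`, `S = nᵀ V n` and `T = tr (P V)`, so that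
`τ = n ⊗ Q + Q ⊗ n − n⁽²⁾ P V P − S P + T (n⁽²⁾ P − n ⊗ n)`.
Symmetry is read off this form, and a gauge transformation factors into a rescaling by `u`,
under which `τ` has weight `−1`, and a shift by `W`, under which it is invariant.

For the vanishing criteria, the inverse-block relations `P γ + n ℓᵀ = 1` (whose transpose is
`γ P + ℓ nᵀ = 1`, by symmetry), `P ℓ = −ℓ⁽²⁾ n`, `γ n = −n⁽²⁾ ℓ` and `n · ℓ = 1 − n⁽²⁾ ℓ⁽²⁾` give
`γ τ γ = (n⁽²⁾ T − S) γ − n⁽²⁾ V`, `τ ℓ = Q − T n` and `tr (τ γ) = (m − 1) (n⁽²⁾ T − S)`.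
If `τ = 0` and `m ≥ 2`, the trace gives `S = n⁽²⁾ T`; dotting `Q = T n` with `ℓ` then gives
`T = 0`, hence `S = 0`, `Q = 0` and `n⁽²⁾ V = 0`. When `n⁽²⁾ = 0` one still gets `V n = 0`
from `V n = γ Q + S ℓ`.
-/

open Matrix

theorem Matrix.IsSymm.vecMul_eq {ι α : Type*} [Fintype ι] [CommSemiring α] {M : Matrix ι ι α}
    (hM : M.IsSymm) (x : ι → α) : x ᵥ* M = M *ᵥ x := by
  rw [← mulVec_transpose, hM.eq]

namespace HypData

section ShellTensor

variable {ι : Type*} [Fintype ι] {P V : Matrix ι ι ℝ} {n : ι → ℝ} {n2 : ℝ}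

def shellTensor (P V : Matrix ι ι ℝ) (n : ι → ℝ) (n2 : ℝ) : Matrix ι ι ℝ :=
  vecMulVec n (P *ᵥ V *ᵥ n) + vecMulVec (P *ᵥ V *ᵥ n) n - n2 • (P * V * P)
    - (n ⬝ᵥ V *ᵥ n) • P + (P * V).trace • (n2 • P - vecMulVec n n)

theorem shellTensor_transpose (hP : P.IsSymm) (hV : V.IsSymm) :
    (shellTensor P V n n2)ᵀ = shellTensor P V n n2 := by
  simp only [shellTensor, transpose_add, transpose_sub, transpose_smul, transpose_vecMulVec,
    transpose_mul, hP.eq, hV.eq, Matrix.mul_assoc]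
  abel

theorem shellTensor_gauge_scale {u : ℝ} (hu : u ≠ 0) :
    shellTensor P (u • V) (u⁻¹ • n) ((u ^ 2)⁻¹ * n2) = u⁻¹ • shellTensor P V n n2 := by
  simp only [shellTensor, smul_mulVec, mulVec_smul, vecMulVec_smul, smul_vecMulVec,
    dotProduct_smul, smul_dotProduct, Matrix.mul_smul, Matrix.smul_mul, trace_smul, smul_eq_mul]
  match_scalars <;> field_simp

theorem shellTensor_gauge_shift (hP : P.IsSymm) (hV : V.IsSymm) (W : ι → ℝ) :
    shellTensor (P + n2 • vecMulVec W W - vecMulVec W n - vecMulVec n W) V (n - n2 • W) n2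
      = shellTensor P V n n2 := by
  simp only [shellTensor, add_mulVec, sub_mulVec, smul_mulVec, vecMulVec_mulVec, mulVec_sub,
    mulVec_smul, add_mul, sub_mul, smul_mul, Matrix.mul_add, Matrix.mul_sub, Matrix.mul_smul,
    vecMulVec_mul, mul_vecMulVec, vecMulVec_add, vecMulVec_sub, add_vecMulVec, sub_vecMulVec,
    vecMulVec_smul, smul_vecMulVec, dotProduct_sub, sub_dotProduct, dotProduct_smul,
    smul_dotProduct,
    trace_add, trace_sub, trace_smul, trace_vecMulVec, hP.vecMul_eq, hV.vecMul_eq, ← mulVec_mulVec,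
    op_smul_eq_smul, smul_eq_mul, smul_smul]
  have hnW : n ⬝ᵥ V *ᵥ W = W ⬝ᵥ V *ᵥ n := by rw [dotProduct_mulVec, hV.vecMul_eq, dotProduct_comm]
  simp only [dotProduct_comm (V *ᵥ _), hnW]
  module

theorem shellTensor_zero_n (P V : Matrix ι ι ℝ) (n2 : ℝ) :
    shellTensor P V 0 n2 = n2 • ((P * V).trace • P - P * V * P) := by
  simp only [shellTensor, mulVec_zero, vecMulVec_zero, dotProduct_zero]
  module

end ShellTensor

variable {m : ℕ} {γ P V : Matrix (Fin m) (Fin m) ℝ} {ℓ n : Fin m → ℝ} {ℓ2 n2 : ℝ}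

theorem sum_sum_mul_eq_trace (hV : V.IsSymm) : ∑ c, ∑ d, P c d * V c d = (P * V).trace := by
  simp only [trace, diag, mul_apply, hV.apply]

theorem tauP_eq_shellTensor (hP : P.IsSymm) (hV : V.IsSymm) :
    tauP P n n2 V = shellTensor P V n n2 := by
  ext f a
  simp only [tauP, sum_sum_mul_eq_trace hV, add_mul, Finset.sum_add_distrib, mul_assoc,
    ← Finset.mul_sum]
  simp only [shellTensor, Matrix.add_apply, Matrix.sub_apply, Matrix.smul_apply, vecMulVec_apply,
    mul_mul_apply, transpose_apply, hP.apply, mulVec, dotProduct, smul_eq_mul, mul_comm (V _ _)]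
  ring

theorem tauP_gauge (hP : P.IsSymm) (hV : V.IsSymm) {u : ℝ} (hu : u ≠ 0) (W : Fin m → ℝ)
    (f a : Fin m) :
    tauP (fun a' b' => P a' b' + n2 * W a' * W b' - W a' * n b' - W b' * n a')
        (fun a' => u⁻¹ * (n a' - n2 * W a')) ((u ^ 2)⁻¹ * n2) (fun a' b' => u * V a' b') f a
      = u⁻¹ * tauP P n n2 V f a := by
  set P' := P + n2 • vecMulVec W W - vecMulVec W n - vecMulVec n W
  have hP' : (fun a' b' => P a' b' + n2 * W a' * W b' - W a' * n b' - W b' * n a') = P' := by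
    ext
    simp only [P', Matrix.sub_apply, Matrix.add_apply, Matrix.smul_apply, vecMulVec_apply,
      smul_eq_mul]
    ring
  have hP'symm : P'.IsSymm := IsSymm.ext fun i j => by
    simp only [P', Matrix.sub_apply, Matrix.add_apply, Matrix.smul_apply, vecMulVec_apply,
      smul_eq_mul, hP.apply]
    ring
  have hn' : (fun a' => u⁻¹ * (n a' - n2 * W a')) = u⁻¹ • (n - n2 • W) := by
    ext
    simp
  rw [hP', hn', show (fun a' b' => u * V a' b') = u • V from rfl,
    tauP_eq_shellTensor hP'symm (hV.smul u), tauP_eq_shellTensor hP hV, shellTensor_gauge_scale hu,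
    shellTensor_gauge_shift hP hV]
  rfl

namespace InvBlocks

theorem mul_add_vecMulVec (h : InvBlocks γ ℓ ℓ2 P n n2) : P * γ + vecMulVec n ℓ = 1 := by
  ext a b
  simpa [mul_apply, vecMulVec_apply, one_apply, kd] using h.1 a b

theorem mulVec_ell (h : InvBlocks γ ℓ ℓ2 P n n2) : P *ᵥ ℓ = -(ℓ2 • n) := by
  ext a
  simpa [mulVec, dotProduct, eq_neg_iff_add_eq_zero] using h.2.1 a

theorem dotProduct_ell (h : InvBlocks γ ℓ ℓ2 P n n2) : n ⬝ᵥ ℓ = 1 - n2 * ℓ2 := by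
  simpa [dotProduct, eq_sub_iff_add_eq] using h.2.2.1

theorem mulVec_n (h : InvBlocks γ ℓ ℓ2 P n n2) : γ *ᵥ n = -(n2 • ℓ) := by
  ext a
  simpa [mulVec, dotProduct, eq_neg_iff_add_eq_zero] using h.2.2.2 a

theorem mul_add_vecMulVec' (h : InvBlocks γ ℓ ℓ2 P n n2) (hγ : γ.IsSymm) (hP : P.IsSymm) :
    γ * P + vecMulVec ℓ n = 1 := by
  simpa [transpose_mul, transpose_vecMulVec, hγ.eq, hP.eq] using
    congrArg transpose h.mul_add_vecMulVec

theorem mulVec_dotProduct_ell (h : InvBlocks γ ℓ ℓ2 P n n2) (hP : P.IsSymm) (x : Fin m → ℝ) :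
    (P *ᵥ x) ⬝ᵥ ℓ = -(ℓ2 * (n ⬝ᵥ x)) := by
  rw [dotProduct_comm, dotProduct_mulVec, hP.vecMul_eq, h.mulVec_ell, neg_dotProduct,
    smul_dotProduct, smul_eq_mul]

theorem mulVec_mulVec_eq_sub (h : InvBlocks γ ℓ ℓ2 P n n2) (hγ : γ.IsSymm) (hP : P.IsSymm)
    (x : Fin m → ℝ) : γ *ᵥ P *ᵥ x = x - (n ⬝ᵥ x) • ℓ := by
  rw [mulVec_mulVec, eq_sub_of_add_eq (h.mul_add_vecMulVec' hγ hP), sub_mulVec, one_mulVec,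
    vecMulVec_mulVec, op_smul_eq_smul]

theorem shellTensor_mul (h : InvBlocks γ ℓ ℓ2 P n n2) (hγ : γ.IsSymm) (hP : P.IsSymm) :
    shellTensor P V n n2 * γ
      = vecMulVec n (V *ᵥ n) - n2 • (P * V) + (n2 * (P * V).trace - n ⬝ᵥ V *ᵥ n) • 1 := by
  have hPγ : P * γ = 1 - vecMulVec n ℓ := eq_sub_of_add_eq h.mul_add_vecMulVec
  simp only [shellTensor, add_mul, sub_mul, smul_mul, Matrix.mul_assoc, vecMulVec_mul,
    hγ.vecMul_eq, hPγ, h.mulVec_mulVec_eq_sub hγ hP, h.mulVec_n, Matrix.mul_sub,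
    Matrix.mul_one, mul_vecMulVec, smul_sub, vecMulVec_sub, vecMulVec_smul, vecMulVec_neg]
  module

theorem mul_shellTensor_mul (h : InvBlocks γ ℓ ℓ2 P n n2) (hγ : γ.IsSymm) (hP : P.IsSymm)
    (hV : V.IsSymm) :
    γ * shellTensor P V n n2 * γ = (n2 * (P * V).trace - n ⬝ᵥ V *ᵥ n) • γ - n2 • V := by
  have hγPV : γ * (P * V) = V - vecMulVec ℓ (V *ᵥ n) := by
    rw [← Matrix.mul_assoc, eq_sub_of_add_eq (h.mul_add_vecMulVec' hγ hP), Matrix.sub_mul,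
      Matrix.one_mul, vecMulVec_mul, hV.vecMul_eq]
  rw [Matrix.mul_assoc, h.shellTensor_mul hγ hP]
  simp only [Matrix.mul_add, Matrix.mul_sub, Matrix.mul_smul, mul_vecMulVec, h.mulVec_n, hγPV,
    Matrix.mul_one, neg_vecMulVec, smul_vecMulVec]
  module

theorem trace_shellTensor_mul (h : InvBlocks γ ℓ ℓ2 P n n2) (hγ : γ.IsSymm) (hP : P.IsSymm) :
    (shellTensor P V n n2 * γ).trace = (m - 1) * (n2 * (P * V).trace - n ⬝ᵥ V *ᵥ n) := by
  rw [h.shellTensor_mul hγ hP, trace_add, trace_sub, trace_smul, trace_smul, trace_vecMulVec,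
    trace_one, Fintype.card_fin, smul_eq_mul, smul_eq_mul]
  ring

theorem shellTensor_mulVec_ell (h : InvBlocks γ ℓ ℓ2 P n n2) (hP : P.IsSymm) :
    shellTensor P V n n2 *ᵥ ℓ = P *ᵥ V *ᵥ n - (P * V).trace • n := by
  simp only [shellTensor, add_mulVec, sub_mulVec, smul_mulVec, vecMulVec_mulVec, op_smul_eq_smul,
    ← mulVec_mulVec, h.mulVec_ell, h.mulVec_dotProduct_ell hP, h.dotProduct_ell, mulVec_neg,
    mulVec_smul]
  module

theorem contractions_eq_zero_of_shellTensor_eq_zero (h : InvBlocks γ ℓ ℓ2 P n n2)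
    (hγ : γ.IsSymm) (hP : P.IsSymm) (hV : V.IsSymm) (hm : 2 ≤ m)
    (hτ : shellTensor P V n n2 = 0) :
    n ⬝ᵥ V *ᵥ n = 0 ∧ (P * V).trace = 0 ∧ P *ᵥ V *ᵥ n = 0 ∧ n2 • V = 0 := by
  have hS : n ⬝ᵥ V *ᵥ n = n2 * (P * V).trace := by
    have htr := h.trace_shellTensor_mul (V := V) hγ hP
    rw [hτ, Matrix.zero_mul, trace_zero] at htr
    have hm1 : (m : ℝ) - 1 ≠ 0 := by
      have : (2 : ℝ) ≤ m := by exact_mod_cast hm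
      linarith
    linarith [(mul_eq_zero.mp htr.symm).resolve_left hm1]
  have hQ : P *ᵥ V *ᵥ n = (P * V).trace • n := by
    have hτℓ := h.shellTensor_mulVec_ell (V := V) hP
    rw [hτ, zero_mulVec] at hτℓ
    exact sub_eq_zero.mp hτℓ.symm
  have hT : (P * V).trace = 0 := by
    have hQℓ := h.mulVec_dotProduct_ell hP (V *ᵥ n)
    rw [hQ, smul_dotProduct, h.dotProduct_ell, hS, smul_eq_mul] at hQℓ
    linear_combination hQℓ
  have hnV : n2 • V = 0 := by
    have hγτγ := h.mul_shellTensor_mul hγ hP hV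
    rw [hτ, Matrix.mul_zero, Matrix.zero_mul, hS, hT] at hγτγ
    simpa using hγτγ.symm
  exact ⟨by rw [hS, hT, mul_zero], hT, by rw [hQ, hT, zero_smul], hnV⟩

theorem shellTensor_eq_zero_iff_of_ne_zero (h : InvBlocks γ ℓ ℓ2 P n n2) (hγ : γ.IsSymm)
    (hP : P.IsSymm) (hV : V.IsSymm) (hm : 2 ≤ m) (hn2 : n2 ≠ 0) :
    shellTensor P V n n2 = 0 ↔ V = 0 := by
  refine ⟨fun hτ => ?_, fun hV0 => by simp [shellTensor, hV0]⟩
  have hnV := (h.contractions_eq_zero_of_shellTensor_eq_zero hγ hP hV hm hτ).2.2.2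
  exact (smul_eq_zero.mp hnV).resolve_left hn2

theorem shellTensor_eq_zero_iff_of_eq_zero (h : InvBlocks γ ℓ ℓ2 P n n2) (hγ : γ.IsSymm)
    (hP : P.IsSymm) (hV : V.IsSymm) (hm : 2 ≤ m) (hn2 : n2 = 0) :
    shellTensor P V n n2 = 0 ↔ V *ᵥ n = 0 ∧ (P * V).trace = 0 := by
  refine ⟨fun hτ => ?_, fun ⟨hVn, hT⟩ => by simp [shellTensor, hVn, hT, hn2]⟩
  obtain ⟨hS, hT, hQ, -⟩ := h.contractions_eq_zero_of_shellTensor_eq_zero hγ hP hV hm hτ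
  have hVn := h.mulVec_mulVec_eq_sub hγ hP (V *ᵥ n)
  rw [hQ, hS, mulVec_zero, zero_smul, sub_zero] at hVn
  exact ⟨hVn.symm, hT⟩

theorem n_eq_zero_and_n2_eq_of_ell_eq_zero (h : InvBlocks γ ℓ ℓ2 P n n2) {ε : ℝ}
    (hε : ε = 1 ∨ ε = -1) (hℓ : ℓ = 0) (hℓ2 : ℓ2 = ε) : n = 0 ∧ n2 = ε := by
  have hε0 : ε ≠ 0 := by rcases hε with rfl | rfl <;> norm_num
  have hn := h.mulVec_ell
  have hn2 := h.dotProduct_ell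
  rw [hℓ, mulVec_zero, hℓ2, zero_eq_neg, smul_eq_zero] at hn
  rw [hℓ, dotProduct_zero, hℓ2] at hn2
  refine ⟨hn.resolve_left hε0, ?_⟩
  rcases hε with rfl | rfl <;> linarith

theorem tauP_smul_of_ell_eq_zero (h : InvBlocks γ ℓ ℓ2 P n n2) (hP : P.IsSymm)
    {K : Matrix (Fin m) (Fin m) ℝ} (hK : K.IsSymm) {ε : ℝ} (hε : ε = 1 ∨ ε = -1) (hℓ : ℓ = 0)
    (hℓ2 : ℓ2 = ε) (f a : Fin m) :
    tauP P n n2 (ε • K) f a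
      = -(∑ c, ∑ d, P f c * P a d * K c d) + P f a * (∑ c, ∑ d, P c d * K c d) := by
  obtain ⟨rfl, hn2⟩ := h.n_eq_zero_and_n2_eq_of_ell_eq_zero hε hℓ hℓ2
  subst n2
  have hε2 : ε * ε = 1 := by rcases hε with rfl | rfl <;> norm_num
  have hK1 : shellTensor P (ε • K) 0 ε = shellTensor P K 0 1 := by
    simp only [shellTensor_zero_n, Matrix.mul_smul, Matrix.smul_mul, trace_smul, smul_eq_mul,
      smul_sub, smul_smul, ← mul_assoc, hε2, one_smul]
  rw [tauP_eq_shellTensor hP (hK.smul ε), hK1, ← tauP_eq_shellTensor hP hK]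
  simp [tauP]

end InvBlocks

end HypData

open HypData in
/-- Proposition 6 of the paper, properties of the shell
energy-momentum tensor `τ^{fa}`. -/
theorem statement17 (m : ℕ) (hm : 2 ≤ m)
    (γ : Fin m → Fin m → ℝ) (ℓ : Fin m → ℝ) (ℓ2 : ℝ)
    (P : Fin m → Fin m → ℝ) (n : Fin m → ℝ) (n2 : ℝ)
    (hγs : ∀ a b, γ a b = γ b a) (hPs : ∀ a b, P a b = P b a)
    (hinv : InvBlocks γ ℓ ℓ2 P n n2)
    (V : Fin m → Fin m → ℝ) (hVs : ∀ a b, V a b = V b a) :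
    -- (i) symmetry
    ((∀ f a, tauP P n n2 V f a = tauP P n n2 V a f)
    -- (ii) vanishing criteria
    ∧ (n2 ≠ 0 → ((∀ f a, tauP P n n2 V f a = 0) ↔ ∀ a b, V a b = 0))
    ∧ (n2 = 0 → ((∀ f a, tauP P n n2 V f a = 0) ↔
        ((∀ a, (∑ b, V a b * n b) = 0) ∧ (∑ a, ∑ b, P a b * V a b) = 0)))
    -- (iii) gauge behaviour
    ∧ (∀ u : ℝ, u ≠ 0 → ∀ Wg : Fin m → ℝ,
        ∀ f a,
          tauP (fun a' b' => P a' b' + n2 * Wg a' * Wg b' - Wg a' * n b' - Wg b' * n a')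
            (fun a' => u⁻¹ * (n a' - n2 * Wg a')) ((u ^ 2)⁻¹ * n2)
            (fun a' b' => u * V a' b') f a
          = u⁻¹ * tauP P n n2 V f a)
    -- (iv) the non-degenerate normal gauge
    ∧ (∀ ε : ℝ, (ε = 1 ∨ ε = -1) → (∀ a, ℓ a = 0) → ℓ2 = ε →
        ∀ Kjump : Fin m → Fin m → ℝ, (∀ a b, Kjump a b = Kjump b a) →
        (∀ a b, V a b = ε * Kjump a b) →
        ∀ f a,
          tauP P n n2 V f a
            = -(∑ c, ∑ d, P f c * P a d * Kjump c d)
              + P f a * (∑ c, ∑ d, P c d * Kjump c d))) := by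
  have hγ : Matrix.IsSymm γ := Matrix.IsSymm.ext fun a b => hγs b a
  have hP : Matrix.IsSymm P := Matrix.IsSymm.ext fun a b => hPs b a
  have hV : Matrix.IsSymm V := Matrix.IsSymm.ext fun a b => hVs b a
  have hτ : tauP P n n2 V = shellTensor P V n n2 := tauP_eq_shellTensor hP hV
  refine ⟨fun f a => ?_, fun hn2 => ?_, fun hn2 => ?_, fun u hu W f a => tauP_gauge hP hV hu W f a,
    fun ε hε hℓ hℓ2 K hK hVK f a => ?_⟩
  · rw [hτ]
    exact congr_fun₂ (shellTensor_transpose hP hV) a f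
  · rw [hτ]
    exact Matrix.ext_iff.trans
      ((hinv.shellTensor_eq_zero_iff_of_ne_zero hγ hP hV hm hn2).trans Matrix.ext_iff.symm)
  · rw [hτ]
    exact Matrix.ext_iff.trans ((hinv.shellTensor_eq_zero_iff_of_eq_zero hγ hP hV hm hn2).trans
      (and_congr funext_iff (Iff.of_eq (congrArg (· = 0) (sum_sum_mul_eq_trace hV).symm))))
  · rw [show V = ε • K from Matrix.ext hVK]
    exact hinv.tauP_smul_of_ell_eq_zero hP (Matrix.IsSymm.ext fun a b => hK b a) hε (funext hℓ)
      hℓ2 f a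
end
end
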